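/- arXiv:1909.09101 — 7 statements merged into one kernel-verified Lean document; each statement's English description precedes it below -/
import Mathlib

section
/- Suppose v is even. Then no Mendelsohn triple system of order v has an ℓ-good sequencing for any ℓ ≥ v/2. -/
/-- Rotation of an ordered triple: `(x,y,z) ↦ (y,z,x)`. Cyclic triples are
ordered triples identified up to this rotation. -/
def rotT {X : Type*} (t : X × X × X) : X × X × X := (t.2.1, t.2.2, t.1)

/-- The directed edge `(a,b)` occurs in the cyclic triple `t = (x,y,z)`,
i.e. `(a,b)` is one of `(x,y)`, `(y,z)`, `(z,x)`. -/
def edgeIn {X : Type*} (a b : X) (t : X × X × X) : Prop :=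
  (a, b) = (t.1, t.2.1) ∨ (a, b) = (t.2.1, t.2.2) ∨ (a, b) = (t.2.2, t.1)

/-- `T` is (the triple set of) a Mendelsohn triple system: every triple has
three distinct points, and every ordered pair of distinct points occurs as a
directed edge in exactly one triple of `T` (so each cyclic triple is listed
by exactly one of its rotations). -/
def isMTS {X : Type*} [DecidableEq X] (T : Finset (X × X × X)) : Prop :=
  (∀ t ∈ T, t.1 ≠ t.2.1 ∧ t.2.1 ≠ t.2.2 ∧ t.2.2 ≠ t.1) ∧
  (∀ a b : X, a ≠ b → ∃! t, t ∈ T ∧ edgeIn a b t)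

/-- Membership of a cyclic triple in `T`, up to rotation. -/
def cmem {X : Type*} [DecidableEq X] (t : X × X × X) (T : Finset (X × X × X)) : Prop :=
  t ∈ T ∨ rotT t ∈ T ∨ rotT (rotT t) ∈ T

/-- A sequencing of `X` is a cyclic arrangement, encoded as a bijection
`pos : X ≃ ZMod v` recording the position of each point on a directed cycle
of length `v`.  The cyclic triple `t = (x,y,z)` is *contained* in the
sequencing if, starting at `x` and proceeding around the cycle, `y` is
encountered before `z`. -/
def containedIn {X : Type*} {v : ℕ} (pos : X ≃ ZMod v) (t : X × X × X) : Prop :=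
  (pos t.2.1 - pos t.1).val < (pos t.2.2 - pos t.1).val

/-- The three points of `t` all lie in some window of `ℓ` cyclically
consecutive points of the sequencing `pos`. -/
def inWindow {X : Type*} {v : ℕ} (pos : X ≃ ZMod v) (ℓ : ℕ) (t : X × X × X) : Prop :=
  ∃ s : ZMod v, (pos t.1 - s).val < ℓ ∧ (pos t.2.1 - s).val < ℓ ∧ (pos t.2.2 - s).val < ℓ

/-- The sequencing `pos` is `ℓ`-good for the triple set `T`: no cyclic triple
of the system is contained in the sequencing with all three of its points
among `ℓ` cyclically consecutive points. -/
def isGood {X : Type*} [DecidableEq X] {v : ℕ} (pos : X ≃ ZMod v) (ℓ : ℕ)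
    (T : Finset (X × X × X)) : Prop :=
  ∀ t : X × X × X, cmem t T → ¬ (containedIn pos t ∧ inWindow pos ℓ t)

namespace NGSaux

variable {v : ℕ} [NeZero v]

lemma natCast_val_self (u : ZMod v) : ((u.val : ℕ) : ZMod v) = u :=
  ZMod.natCast_rightInverse u

lemma natCast_ne_zero {β : ℕ} (h0 : 0 < β) (h : β < v) : (β : ZMod v) ≠ 0 := by
  intro he
  have := congrArg ZMod.val he
  rw [ZMod.val_cast_of_lt h, ZMod.val_zero] at this
  omega

lemma val_neg_natCast {β : ℕ} (h0 : 0 < β) (h : β < v) : (-(β : ZMod v)).val = v - β := by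
  rw [ZMod.neg_val, if_neg (natCast_ne_zero h0 h), ZMod.val_cast_of_lt h]

lemma natCast_inj {a b : ℕ} (ha : a < v) (hb : b < v) (h : (a : ZMod v) = (b : ZMod v)) :
    a = b := by
  have := congrArg ZMod.val h
  rwa [ZMod.val_cast_of_lt ha, ZMod.val_cast_of_lt hb] at this

lemma eq_of_val_eq {a b : ZMod v} (h : a.val = b.val) : a = b :=
  ZMod.val_injective v h

variable {X : Type*} [DecidableEq X]

/-- Normalisation: the unique triple of `T` containing a directed edge `(a,b)` can be
written, up to rotation, as `(a,b,c)`. -/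
lemma exists_norm (T : Finset (X × X × X)) (hT : isMTS T) {a b : X} (hab : a ≠ b) :
    ∃ (t : X × X × X) (c : X), t ∈ T ∧ b ≠ c ∧ c ≠ a ∧ cmem (a, b, c) T ∧
      (∀ x y : X, edgeIn x y t ↔
        ((x, y) = (a, b) ∨ (x, y) = (b, c) ∨ (x, y) = (c, a))) := by
  obtain ⟨t, ⟨htT, hedge⟩, -⟩ := hT.2 a b hab
  obtain ⟨d1, d2, d3⟩ := hT.1 t htT
  obtain ⟨t1, t2, t3⟩ := t
  simp only [edgeIn, Prod.mk.injEq] at hedge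
  rcases hedge with ⟨rfl, rfl⟩ | ⟨rfl, rfl⟩ | ⟨rfl, rfl⟩
  · exact ⟨(a, b, t3), t3, htT, d2, d3, Or.inl htT,
      fun x y => by simp only [edgeIn, Prod.mk.injEq]; try tauto⟩
  · exact ⟨(t1, a, b), t1, htT, d3, d1, Or.inr (Or.inr htT),
      fun x y => by simp only [edgeIn, Prod.mk.injEq]; try tauto⟩
  · exact ⟨(b, t2, a), t2, htT, d1, d2, Or.inr (Or.inl htT),
      fun x y => by simp only [edgeIn, Prod.mk.injEq]; try tauto⟩

/-- The triple through a consecutive directed edge of the sequencing is contained in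
the sequencing, and (by `ℓ`-goodness) its third point is constrained. -/
lemma consec_triple (hv2 : 2 ≤ v) {ℓ : ℕ} (hl3 : 3 ≤ ℓ)
    (T : Finset (X × X × X)) (hT : isMTS T) (pos : X ≃ ZMod v) (hg : isGood pos ℓ T)
    (i : ZMod v) :
    ∃ (t : X × X × X) (c : X) (β : ℕ),
      t ∈ T ∧
      (∀ x y : X, edgeIn x y t ↔
        ((x, y) = (pos.symm i, pos.symm (i+1)) ∨ (x, y) = (pos.symm (i+1), c) ∨
          (x, y) = (c, pos.symm i))) ∧
      pos c = i + 1 + (β : ZMod v) ∧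
      1 ≤ β ∧ β ≤ v - 2 ∧ ℓ - 1 ≤ β ∧ β + ℓ ≤ v := by
  have v1 : (1 : ZMod v).val = 1 := by
    rw [ZMod.val_one_eq_one_mod]; exact Nat.mod_eq_of_lt (by omega)
  have hab : pos.symm i ≠ pos.symm (i + 1) := by
    intro h
    have h2 : i = i + 1 := pos.symm.injective h
    have h3 : (1 : ZMod v) = 0 := by
      have h4 := congrArg (· - i) h2
      simpa using h4.symm
    have h5 := congrArg ZMod.val h3
    rw [v1, ZMod.val_zero] at h5
    omega
  obtain ⟨t, c, htT, hbc, hca, hcm, hiff⟩ := exists_norm T hT hab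
  set a := pos.symm i with ha
  set b := pos.symm (i + 1) with hb
  have hpa : pos a = i := pos.apply_symm_apply i
  have hpb : pos b = i + 1 := pos.apply_symm_apply (i + 1)
  set β := (pos c - (i + 1)).val with hβ
  have hk : pos c = i + 1 + (β : ZMod v) := by
    rw [hβ, natCast_val_self]; ring
  have hβv : β < v := ZMod.val_lt _
  have hβ0 : β ≠ 0 := by
    intro h0
    apply hbc
    apply pos.injective
    rw [hpb, hk, h0]; push_cast; ring
  have hβtop : β ≠ v - 1 := by
    intro htop
    apply hca
    apply pos.injective
    rw [hpa, hk, htop]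
    push_cast [Nat.cast_sub (by omega : 1 ≤ v)]
    rw [ZMod.natCast_self]
    ring
  have hβ2 : β ≤ v - 2 := by omega
  -- value computations
  have hdiffca : pos c - pos a = ((1 + β : ℕ) : ZMod v) := by
    rw [hpa, hk]; push_cast; ring
  have hdiffba : pos b - pos a = (1 : ZMod v) := by rw [hpa, hpb]; ring
  have hcont : containedIn pos (a, b, c) := by
    show (pos b - pos a).val < (pos c - pos a).val
    rw [hdiffba, hdiffca, v1, ZMod.val_cast_of_lt (by omega : 1 + β < v)]
    omega
  have hnw : ¬ inWindow pos ℓ (a, b, c) := fun w => hg (a, b, c) hcm ⟨hcont, w⟩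
  have hge : ℓ - 1 ≤ β := by
    by_contra hlt
    push_neg at hlt
    apply hnw
    refine ⟨i, ?_, ?_, ?_⟩
    · show (pos a - i).val < ℓ
      rw [hpa, sub_self, ZMod.val_zero]; omega
    · show (pos b - i).val < ℓ
      rw [hpb, add_sub_cancel_left, v1]; omega
    · show (pos c - i).val < ℓ
      have : pos c - i = ((1 + β : ℕ) : ZMod v) := by rw [hk]; push_cast; ring
      rw [this, ZMod.val_cast_of_lt (by omega : 1 + β < v)]
      omega
  have hle : β + ℓ ≤ v := by
    by_contra hgt
    push_neg at hgt
    apply hnw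
    refine ⟨pos c, ?_, ?_, ?_⟩
    · show (pos a - pos c).val < ℓ
      have : pos a - pos c = -((1 + β : ℕ) : ZMod v) := by rw [hpa, hk]; push_cast; ring
      rw [this, val_neg_natCast (by omega) (by omega)]
      omega
    · show (pos b - pos c).val < ℓ
      have : pos b - pos c = -((β : ℕ) : ZMod v) := by rw [hpb, hk]; ring
      rw [this, val_neg_natCast (by omega) (by omega)]
      omega
    · show (pos c - pos c).val < ℓ
      rw [sub_self, ZMod.val_zero]; omega
  exact ⟨t, c, β, htT, hiff, hk, by omega, hβ2, hge, hle⟩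

end NGSaux

open NGSaux in
/-- If `v` is even, no MTS(`v`) has an `ℓ`-good sequencing for `ℓ ≥ v/2`
(where, as in the definition, `ℓ ≥ 3`). -/
theorem no_good_sequencing_even {X : Type*} [Fintype X] [DecidableEq X] {v ℓ : ℕ}
    (hX : Fintype.card X = v) (hv : Even v) (hl3 : 3 ≤ ℓ) (hl : v / 2 ≤ ℓ)
    (T : Finset (X × X × X)) (hT : isMTS T) (pos : X ≃ ZMod v) :
    ¬ isGood pos ℓ T := by
  intro hg
  -- dispose of `v = 0`
  rcases Nat.eq_zero_or_pos v with hv0 | hvpos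
  · subst hv0
    have : IsEmpty X := Fintype.card_eq_zero_iff.mp hX
    exact this.false (pos.symm 0)
  obtain ⟨m, hvm⟩ := hv
  have hv2 : 2 ≤ v := by omega
  haveI : NeZero v := ⟨by omega⟩
  have v1 : (1 : ZMod v).val = 1 := by rw [ZMod.val_one_eq_one_mod]; exact Nat.mod_eq_of_lt (by omega)
  -- the family of triples through consecutive edges
  choose tf cf bf htTf hif hkf hb1 hb2 hb3 hb4 using
    fun j : ZMod v => consec_triple hv2 hl3 T hT pos hg j
  -- from goodness, `ℓ = m = v/2`
  have hlm : ℓ = m := by have e1 := hb3 0; have e2 := hb4 0; omega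
  have hm3 : 3 ≤ m := by omega
  have hbm : ∀ j : ZMod v, bf j = m - 1 ∨ bf j = m := by
    intro j; have e1 := hb3 j; have e2 := hb4 j; omega
  have hpos : ∀ s : ZMod v, pos (pos.symm s) = s := fun s => pos.apply_symm_apply s
  -- all edge-lengths in a consecutive triple lie in {1, m-1, m}
  have hBd : ∀ j : ZMod v, ∀ x y : X, edgeIn x y (tf j) →
      (pos y - pos x).val = 1 ∨ (pos y - pos x).val = m - 1 ∨ (pos y - pos x).val = m := by
    intro j x y hxy
    rcases (hif j x y).1 hxy with h | h | h <;>
      simp only [Prod.mk.injEq] at h <;> obtain ⟨rfl, rfl⟩ := h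
    · left
      rw [hpos, hpos, add_sub_cancel_left, v1]
    · have : pos (cf j) - pos (pos.symm (j+1)) = ((bf j : ℕ) : ZMod v) := by
        rw [hpos, hkf]; ring
      rw [this, ZMod.val_cast_of_lt (by have := hb2 j; omega)]
      rcases hbm j with h | h <;> omega
    · have : pos (pos.symm j) - pos (cf j) = -(((1 + bf j : ℕ)) : ZMod v) := by
        rw [hpos, hkf]; push_cast; ring
      rw [this, val_neg_natCast (by omega) (by have := hb2 j; omega)]
      have := hb2 j
      rcases hbm j with h | h <;> omega
  -- basic cast facts
  have hmv : m < v := by omega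
  have hmm0 : ((m : ℕ) : ZMod v) ≠ 0 := natCast_ne_zero (by omega) hmv
  have hmmsum : ((m : ℕ) : ZMod v) + ((m : ℕ) : ZMod v) = 0 := by
    rw [← Nat.cast_add, show m + m = v from hvm.symm]
    exact ZMod.natCast_self v
  have hm1m : (1 : ZMod v) + ((m - 1 : ℕ) : ZMod v) = ((m : ℕ) : ZMod v) := by
    rw [← Nat.cast_one, ← Nat.cast_add]
    congr 1
    omega
  -- the consecutive triples are pairwise distinct
  have htinj : ∀ j j' : ZMod v, tf j = tf j' → j = j' := by
    intro j j' he
    have h1 : edgeIn (pos.symm j') (pos.symm (j'+1)) (tf j) := by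
      rw [he]; exact (hif j' _ _).2 (Or.inl rfl)
    rcases (hif j _ _).1 h1 with h | h | h <;> simp only [Prod.mk.injEq] at h
    · exact (pos.symm.injective h.1).symm
    · exfalso
      have e1 : j' = j + 1 := pos.symm.injective h.1
      have e2 : pos (pos.symm (j' + 1)) = pos (cf j) := congrArg pos h.2
      rw [hpos, hkf, e1] at e2
      have e3 : (1 : ZMod v) = ((bf j : ℕ) : ZMod v) := add_left_cancel e2
      have e4 := congrArg ZMod.val e3
      rw [v1, ZMod.val_cast_of_lt (by have := hb2 j; omega)] at e4
      rcases hbm j with h' | h' <;> omega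
    · exfalso
      have e1 : j' = pos (cf j) := by
        have := congrArg pos h.1
        rwa [hpos] at this
      have e2 : j' + 1 = j := pos.symm.injective h.2
      rw [e1, hkf] at e2
      have e3 : ((bf j + 2 : ℕ) : ZMod v) = 0 := by
        push_cast
        linear_combination e2
      have := hb2 j
      exact natCast_ne_zero (by omega) (by rcases hbm j with h' | h' <;> omega) e3
  -- the map sending j to the start of the edge of length m in tf j
  set σf : ZMod v → ZMod v :=
    fun j => if bf j = m then j + 1 else j + ((m:ℕ) : ZMod v) with hσf
  have hσedge : ∀ j, edgeIn (pos.symm (σf j)) (pos.symm (σf j + ((m:ℕ):ZMod v))) (tf j) := by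
    intro j
    rcases hbm j with h | h
    · have hne : ¬ (bf j = m) := by omega
      have hσ : σf j = j + ((m:ℕ):ZMod v) := by rw [hσf]; simp only [if_neg hne]
      have hc : pos.symm (σf j) = cf j := by
        rw [Equiv.symm_apply_eq, hσ, hkf, h]
        linear_combination - hm1m
      have hend : pos.symm (σf j + ((m:ℕ):ZMod v)) = pos.symm j := by
        congr 1
        rw [hσ, add_assoc, hmmsum, add_zero]
      refine (hif j _ _).2 (Or.inr (Or.inr ?_))
      rw [hc, hend]
    · have hσ : σf j = j + 1 := by rw [hσf]; simp only [if_pos h]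
      have hend : pos.symm (σf j + ((m:ℕ):ZMod v)) = cf j := by
        rw [Equiv.symm_apply_eq, hσ, hkf, h]
      refine (hif j _ _).2 (Or.inr (Or.inl ?_))
      rw [hend, hσ]
  have hσinj : Function.Injective σf := by
    intro j j' h
    apply htinj
    have e1 := hσedge j
    have e2 := hσedge j'
    rw [← h] at e2
    have hne : pos.symm (σf j) ≠ pos.symm (σf j + ((m:ℕ):ZMod v)) := by
      intro hq
      exact hmm0 (left_eq_add.mp (pos.symm.injective hq))
    exact (hT.2 _ _ hne).unique ⟨htTf j, e1⟩ ⟨htTf j', e2⟩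
  have hσsurj : Function.Surjective σf := Finite.surjective_of_injective hσinj
  -- every triple containing an edge of length m is a consecutive triple
  have hBm : ∀ t ∈ T, ∀ x y : X, edgeIn x y t → (pos y - pos x).val = m →
      ∀ x' y' : X, edgeIn x' y' t →
        (pos y' - pos x').val = 1 ∨ (pos y' - pos x').val = m - 1 ∨
          (pos y' - pos x').val = m := by
    intro t ht x y hxy hval
    obtain ⟨j, hj⟩ := hσsurj (pos x)
    have hyx : pos y = pos x + ((m:ℕ) : ZMod v) := by
      have e : pos y - pos x = ((m:ℕ) : ZMod v) :=
        eq_of_val_eq (by rw [hval, ZMod.val_cast_of_lt hmv])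
      linear_combination e
    have hxyne : x ≠ y := by
      intro hq; rw [hq, sub_self, ZMod.val_zero] at hval; omega
    have he : edgeIn x y (tf j) := by
      have e := hσedge j
      rw [hj, pos.symm_apply_apply,
        show pos.symm (pos x + ((m:ℕ):ZMod v)) = y by
          rw [← hyx]; exact pos.symm_apply_apply y] at e
      exact e
    rw [(hT.2 x y hxyne).unique ⟨ht, hxy⟩ ⟨htTf j, he⟩]
    exact hBd j
  -- the same for edges of length m-1
  have hm1v : m - 1 < v := by omega
  have hm10 : ((m - 1 : ℕ) : ZMod v) ≠ 0 := natCast_ne_zero (by omega) hm1v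
  set τf : ZMod v → ZMod v :=
    fun j => if bf j = m then j + 1 + ((m:ℕ) : ZMod v) else j + 1 with hτf
  have hτedge : ∀ j, edgeIn (pos.symm (τf j)) (pos.symm (τf j + ((m - 1:ℕ):ZMod v))) (tf j) := by
    intro j
    rcases hbm j with h | h
    · have hne : ¬ (bf j = m) := by omega
      have hτ : τf j = j + 1 := by rw [hτf]; simp only [if_neg hne]
      have hend : pos.symm (τf j + ((m - 1:ℕ):ZMod v)) = cf j := by
        rw [Equiv.symm_apply_eq, hτ, hkf, h]
      refine (hif j _ _).2 (Or.inr (Or.inl ?_))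
      rw [hend, hτ]
    · have hτ : τf j = j + 1 + ((m:ℕ):ZMod v) := by rw [hτf]; simp only [if_pos h]
      have hc : pos.symm (τf j) = cf j := by
        rw [Equiv.symm_apply_eq, hτ, hkf, h]
      have hend : pos.symm (τf j + ((m - 1:ℕ):ZMod v)) = pos.symm j := by
        congr 1
        rw [hτ]
        linear_combination hm1m + hmmsum
      refine (hif j _ _).2 (Or.inr (Or.inr ?_))
      rw [hc, hend]
  have hτinj : Function.Injective τf := by
    intro j j' h
    apply htinj
    have e1 := hτedge j
    have e2 := hτedge j'
    rw [← h] at e2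
    have hne : pos.symm (τf j) ≠ pos.symm (τf j + ((m - 1:ℕ):ZMod v)) := by
      intro hq
      exact hm10 (left_eq_add.mp (pos.symm.injective hq))
    exact (hT.2 _ _ hne).unique ⟨htTf j, e1⟩ ⟨htTf j', e2⟩
  have hτsurj : Function.Surjective τf := Finite.surjective_of_injective hτinj
  have hBm1 : ∀ t ∈ T, ∀ x y : X, edgeIn x y t → (pos y - pos x).val = m - 1 →
      ∀ x' y' : X, edgeIn x' y' t →
        (pos y' - pos x').val = 1 ∨ (pos y' - pos x').val = m - 1 ∨
          (pos y' - pos x').val = m := by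
    intro t ht x y hxy hval
    obtain ⟨j, hj⟩ := hτsurj (pos x)
    have hyx : pos y = pos x + ((m - 1:ℕ) : ZMod v) := by
      have e : pos y - pos x = ((m - 1:ℕ) : ZMod v) :=
        eq_of_val_eq (by rw [hval, ZMod.val_cast_of_lt hm1v])
      linear_combination e
    have hxyne : x ≠ y := by
      intro hq; rw [hq, sub_self, ZMod.val_zero] at hval; omega
    have he : edgeIn x y (tf j) := by
      have e := hτedge j
      rw [hj, pos.symm_apply_apply,
        show pos.symm (pos x + ((m - 1:ℕ):ZMod v)) = y by
          rw [← hyx]; exact pos.symm_apply_apply y] at e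
      exact e
    rw [(hT.2 x y hxyne).unique ⟨ht, hxy⟩ ⟨htTf j, he⟩]
    exact hBd j
  -- final contradiction, in two cases
  rcases (by omega : m = 3 ∨ 4 ≤ m) with hm4 | hm4
  · -- m = 3, v = 6
    have hv6 : v = 6 := by omega
    subst hv6
    have hab : pos.symm (1 : ZMod 6) ≠ pos.symm 0 := by
      intro h
      exact (by decide : (1 : ZMod 6) ≠ 0) (pos.symm.injective h)
    obtain ⟨u, c, huT, hbc, hca, hcmu, hiffu⟩ := exists_norm T hT hab
    have hd5 : (pos (pos.symm (0 : ZMod 6)) - pos (pos.symm (1 : ZMod 6))).val = 5 := by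
      rw [hpos, hpos]; decide
    have hk0 : pos c ≠ 0 := by
      intro h
      apply hbc
      apply pos.injective
      rw [hpos, h]
    have hk1 : pos c ≠ 1 := by
      intro h
      apply hca
      apply pos.injective
      rw [hpos, h]
    have hcase : ∀ k : ZMod 6, k ≠ 0 → k ≠ 1 → (k = 2 ∨ k = 3 ∨ k = 4 ∨ k = 5) := by decide
    have hall : ∀ x' y' : X, edgeIn x' y' u →
        (pos y' - pos x').val = 1 ∨ (pos y' - pos x').val = m - 1 ∨
          (pos y' - pos x').val = m := by
      rcases hcase (pos c) hk0 hk1 with h | h | h | h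
      · refine hBm1 u huT (pos.symm 0) c ((hiffu _ _).2 (Or.inr (Or.inl rfl))) ?_
        rw [hpos, h]
        have : ((2 : ZMod 6) - 0).val = 2 := by decide
        omega
      · refine hBm u huT (pos.symm 0) c ((hiffu _ _).2 (Or.inr (Or.inl rfl))) ?_
        rw [hpos, h]
        have : ((3 : ZMod 6) - 0).val = 3 := by decide
        omega
      · refine hBm u huT c (pos.symm 1) ((hiffu _ _).2 (Or.inr (Or.inr rfl))) ?_
        rw [hpos, h]
        have : ((1 : ZMod 6) - 4).val = 3 := by decide
        omega
      · refine hBm1 u huT c (pos.symm 1) ((hiffu _ _).2 (Or.inr (Or.inr rfl))) ?_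
        rw [hpos, h]
        have : ((1 : ZMod 6) - 5).val = 2 := by decide
        omega
    have := hall (pos.symm 1) (pos.symm 0) ((hiffu _ _).2 (Or.inl rfl))
    omega
  · -- 4 ≤ m
    have h2v : (2:ℕ) < v := by omega
    have h2ne : ((2:ℕ) : ZMod v) ≠ 0 := natCast_ne_zero (by omega) h2v
    have hP : ∀ i : ZMod v, ∃ u, u ∈ T ∧ ∀ x y : X, edgeIn x y u ↔
        ((x, y) = (pos.symm i, pos.symm (i + ((2:ℕ):ZMod v))) ∨
         (x, y) = (pos.symm (i + ((2:ℕ):ZMod v)), pos.symm (i + 1)) ∨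
         (x, y) = (pos.symm (i + 1), pos.symm i)) := by
      intro i
      have hab : pos.symm i ≠ pos.symm (i + ((2:ℕ):ZMod v)) := by
        intro h
        exact h2ne (left_eq_add.mp (pos.symm.injective h))
      obtain ⟨u, c, huT, hbc, hca, hcmu, hiffu⟩ := exists_norm T hT hab
      set γ := (pos c - (i + ((2:ℕ):ZMod v))).val with hγdef
      have hkc : pos c = i + ((2:ℕ):ZMod v) + ((γ:ℕ) : ZMod v) := by
        rw [hγdef, natCast_val_self]; ring
      have hγv : γ < v := ZMod.val_lt _
      have hγ0 : γ ≠ 0 := by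
        intro h0
        apply hbc
        apply pos.injective
        rw [hpos, hkc, h0]
        push_cast
        ring
      have hγv2 : γ ≠ v - 2 := by
        intro h2
        apply hca
        apply pos.injective
        rw [hpos, hkc, h2]
        have : ((2:ℕ):ZMod v) + ((v - 2 : ℕ) : ZMod v) = 0 := by
          rw [← Nat.cast_add, show 2 + (v - 2) = v from by omega]
          exact ZMod.natCast_self v
        linear_combination this
      by_cases hγ1 : γ = v - 1
      · have hcast : ((2:ℕ):ZMod v) + ((v - 1 : ℕ) : ZMod v) = 1 := by
          rw [← Nat.cast_add, show 2 + (v - 1) = v + 1 from by omega, Nat.cast_add,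
            ZMod.natCast_self, Nat.cast_one, zero_add]
        have hc1 : pos c = i + 1 := by
          rw [hkc, hγ1]
          linear_combination hcast
        have hc : c = pos.symm (i + 1) := by
          rw [← hc1, pos.symm_apply_apply]
        exact ⟨u, huT, fun x y => by rw [hiffu x y, hc]⟩
      · exfalso
        have hγle : γ ≤ v - 3 := by omega
        have hcont : containedIn pos (pos.symm i, pos.symm (i + ((2:ℕ):ZMod v)), c) := by
          show (pos (pos.symm (i + ((2:ℕ):ZMod v))) - pos (pos.symm i)).val
            < (pos c - pos (pos.symm i)).val
          rw [hpos, hpos, add_sub_cancel_left, ZMod.val_cast_of_lt h2v]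
          have e : pos c - i = ((2 + γ : ℕ) : ZMod v) := by
            rw [hkc]; push_cast; ring
          rw [e, ZMod.val_cast_of_lt (by omega)]
          omega
        have hnw : ¬ inWindow pos ℓ (pos.symm i, pos.symm (i + ((2:ℕ):ZMod v)), c) :=
          fun w => hg _ hcmu ⟨hcont, w⟩
        have hge : m - 2 ≤ γ := by
          by_contra hlt
          push_neg at hlt
          apply hnw
          refine ⟨i, ?_, ?_, ?_⟩
          · show (pos (pos.symm i) - i).val < ℓ
            rw [hpos, sub_self, ZMod.val_zero]; omega
          · show (pos (pos.symm (i + ((2:ℕ):ZMod v))) - i).val < ℓ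
            rw [hpos, add_sub_cancel_left, ZMod.val_cast_of_lt h2v]; omega
          · show (pos c - i).val < ℓ
            have e : pos c - i = ((2 + γ : ℕ) : ZMod v) := by rw [hkc]; push_cast; ring
            rw [e, ZMod.val_cast_of_lt (by omega)]
            omega
        have hle : γ ≤ m := by
          by_contra hgt
          push_neg at hgt
          apply hnw
          refine ⟨pos c, ?_, ?_, ?_⟩
          · show (pos (pos.symm i) - pos c).val < ℓ
            have e : pos (pos.symm i) - pos c = -((2 + γ : ℕ) : ZMod v) := by
              rw [hpos, hkc]; push_cast; ring
            rw [e, val_neg_natCast (by omega) (by omega)]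
            omega
          · show (pos (pos.symm (i + ((2:ℕ):ZMod v))) - pos c).val < ℓ
            have e : pos (pos.symm (i + ((2:ℕ):ZMod v))) - pos c = -((γ : ℕ) : ZMod v) := by
              rw [hpos, hkc]; ring
            rw [e, val_neg_natCast (by omega) (by omega)]
            omega
          · show (pos c - pos c).val < ℓ
            rw [sub_self, ZMod.val_zero]; omega
        have hd2 : (pos (pos.symm (i + ((2:ℕ):ZMod v))) - pos (pos.symm i)).val = 2 := by
          rw [hpos, hpos, add_sub_cancel_left, ZMod.val_cast_of_lt h2v]
        rcases (by omega : γ = m - 2 ∨ γ = m - 1 ∨ γ = m) with h | h | h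
        · have hval : (pos (pos.symm i) - pos c).val = m := by
            have e : pos (pos.symm i) - pos c = -((2 + γ : ℕ) : ZMod v) := by
              rw [hpos, hkc]; push_cast; ring
            rw [e, val_neg_natCast (by omega) (by omega)]
            omega
          have := hBm u huT c (pos.symm i) ((hiffu _ _).2 (Or.inr (Or.inr rfl))) hval
            (pos.symm i) (pos.symm (i + ((2:ℕ):ZMod v))) ((hiffu _ _).2 (Or.inl rfl))
          omega
        · have hval : (pos c - pos (pos.symm (i + ((2:ℕ):ZMod v)))).val = m - 1 := by
            rw [hpos, hkc, add_sub_cancel_left, ZMod.val_cast_of_lt (by omega)]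
            omega
          have := hBm1 u huT (pos.symm (i + ((2:ℕ):ZMod v))) c
            ((hiffu _ _).2 (Or.inr (Or.inl rfl))) hval
            (pos.symm i) (pos.symm (i + ((2:ℕ):ZMod v))) ((hiffu _ _).2 (Or.inl rfl))
          omega
        · have hval : (pos c - pos (pos.symm (i + ((2:ℕ):ZMod v)))).val = m := by
            rw [hpos, hkc, add_sub_cancel_left, ZMod.val_cast_of_lt (by omega)]
            omega
          have := hBm u huT (pos.symm (i + ((2:ℕ):ZMod v))) c
            ((hiffu _ _).2 (Or.inr (Or.inl rfl))) hval
            (pos.symm i) (pos.symm (i + ((2:ℕ):ZMod v))) ((hiffu _ _).2 (Or.inl rfl))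
          omega
    obtain ⟨u0, hu0, hA⟩ := hP 0
    obtain ⟨u1, hu1, hB⟩ := hP 1
    have e0 : edgeIn (pos.symm ((0:ZMod v) + ((2:ℕ):ZMod v))) (pos.symm ((0:ZMod v) + 1)) u0 :=
      (hA _ _).2 (Or.inr (Or.inl rfl))
    have e1 : edgeIn (pos.symm ((0:ZMod v) + ((2:ℕ):ZMod v))) (pos.symm ((0:ZMod v) + 1)) u1 := by
      refine (hB _ _).2 (Or.inr (Or.inr ?_))
      rw [show (0:ZMod v) + ((2:ℕ):ZMod v) = 1 + 1 from by push_cast; ring,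
        show (0:ZMod v) + 1 = 1 from by ring]
    have hne21 : pos.symm ((0:ZMod v) + ((2:ℕ):ZMod v)) ≠ pos.symm ((0:ZMod v) + 1) := by
      intro h
      have e := pos.symm.injective h
      have e2 : ((2:ℕ):ZMod v) = ((1:ℕ):ZMod v) := by
        push_cast at e ⊢
        linear_combination e
      have := natCast_inj h2v (by omega) e2
      omega
    have hu01 : u0 = u1 := (hT.2 _ _ hne21).unique ⟨hu0, e0⟩ ⟨hu1, e1⟩
    have e2 : edgeIn (pos.symm (0:ZMod v)) (pos.symm ((0:ZMod v) + ((2:ℕ):ZMod v))) u1 := by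
      rw [← hu01]
      exact (hA _ _).2 (Or.inl rfl)
    have hzero : ∀ n : ℕ, 0 < n → n < v → (0 : ZMod v) ≠ ((n:ℕ):ZMod v) := by
      intro n h1 h2 h
      exact natCast_ne_zero h1 h2 h.symm
    rcases (hB _ _).1 e2 with h | h | h <;> simp only [Prod.mk.injEq] at h
    · have e := pos.symm.injective h.1
      exact hzero 1 (by omega) (by omega) (by push_cast; linear_combination e)
    · have e := pos.symm.injective h.1
      exact hzero 3 (by omega) (by omega) (by push_cast; linear_combination e)
    · have e := pos.symm.injective h.1
      exact hzero 2 (by omega) (by omega) (by push_cast; linear_combination e)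
end

section
/- Suppose v is odd. Then no Mendelsohn triple system of order v has an ℓ-good sequencing for any ℓ ≥ (v+1)/2. -/
/-- If `v` is odd, no MTS(`v`) has an `ℓ`-good sequencing for `ℓ ≥ (v+1)/2`
(where, as in the definition, `ℓ ≥ 3`). -/
theorem no_good_sequencing_odd {X : Type*} [Fintype X] [DecidableEq X] {v ℓ : ℕ}
    (hX : Fintype.card X = v) (hv : Odd v) (hv3 : 3 ≤ v) (hl3 : 3 ≤ ℓ)
    (hl : (v + 1) / 2 ≤ ℓ)
    (T : Finset (X × X × X)) (hT : isMTS T) (pos : X ≃ ZMod v) :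
    ¬ isGood pos ℓ T := by
  haveI : NeZero v := ⟨by omega⟩
  haveI : Fact (1 < v) := ⟨by omega⟩
  intro hGood
  obtain ⟨m, hm⟩ := hv
  set p := pos.symm with hp
  have hpos : ∀ x : ZMod v, pos (p x) = x := fun x => pos.apply_symm_apply x
  -- main lemma: the third point of the triple through a consecutive edge
  have main : ∀ (a : ZMod v) (w : X), cmem (p a, p (a + 1), w) T →
      w ≠ p a → w ≠ p (a + 1) → ℓ < v ∧ w = p (a + 1 + (m : ℕ)) := by
    intro a w hcm hwa hwb
    set c := pos w with hc
    have hw : w = p c := (pos.symm_apply_apply w).symm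
    have hca : c ≠ a := fun h => hwa (by rw [hw, h])
    have hcb : c ≠ a + 1 := fun h => hwb (by rw [hw, h])
    set d2 := (c - (a + 1)).val with hd2
    set d3 := (a - c).val with hd3
    have hd2p : 0 < d2 := Nat.pos_of_ne_zero fun h => hcb (by
      have h' := (ZMod.val_eq_zero _).mp h
      have := sub_eq_zero.mp h'
      exact this)
    have hd3p : 0 < d3 := Nat.pos_of_ne_zero fun h => hca (by
      have h' := (ZMod.val_eq_zero _).mp h
      exact (sub_eq_zero.mp h').symm)
    have hd2lt : d2 < v := ZMod.val_lt _
    have hd3lt : d3 < v := ZMod.val_lt _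
    have hv1 : ((a + 1 : ZMod v) - a).val = 1 := by
      have : (a + 1 : ZMod v) - a = 1 := by ring
      rw [this, ZMod.val_one]
    have hcastd2 : ((d2 : ℕ) : ZMod v) = c - (a + 1) := ZMod.natCast_zmod_val _
    have hcastd3 : ((d3 : ℕ) : ZMod v) = a - c := ZMod.natCast_zmod_val _
    have hsum0 : ((1 + d2 + d3 : ℕ) : ZMod v) = 0 := by
      push_cast
      rw [hcastd2, hcastd3]
      ring
    have hdvd : v ∣ 1 + d2 + d3 := (ZMod.natCast_eq_zero_iff _ _).mp hsum0
    have hsum : 1 + d2 + d3 = v := by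
      rcases hdvd with ⟨k, hk⟩
      have hk2 : k < 2 := by
        by_contra hcon
        push_neg at hcon
        have : v * 2 ≤ v * k := Nat.mul_le_mul_left v hcon
        omega
      interval_cases k <;> omega
    have hcA : (c - a).val = 1 + d2 := by
      have h1 : c - a = (c - (a + 1)) + ((a + 1) - a) := by ring
      rw [h1, ZMod.val_add, ← hd2, hv1, Nat.mod_eq_of_lt (by omega)]
      omega
    have hAB : (a - (a + 1)).val = d3 + d2 := by
      have h1 : a - (a + 1) = (a - c) + (c - (a + 1)) := by ring
      rw [h1, ZMod.val_add, ← hd2, ← hd3, Nat.mod_eq_of_lt (by omega)]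
    have hBc : ((a + 1 : ZMod v) - c).val = 1 + d3 := by
      have h1 : (a + 1 : ZMod v) - c = ((a + 1) - a) + (a - c) := by ring
      rw [h1, ZMod.val_add, hv1, ← hd3, Nat.mod_eq_of_lt (by omega)]
    have hcont : containedIn pos (p a, p (a + 1), w) := by
      show (pos (p (a + 1)) - pos (p a)).val < (pos w - pos (p a)).val
      rw [hpos, hpos, ← hc, hv1, hcA]
      omega
    have notwin : ¬ inWindow pos ℓ (p a, p (a + 1), w) :=
      fun hwin => hGood _ hcm ⟨hcont, hwin⟩
    have w1 : ¬ v ≤ ℓ := by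
      intro h
      apply notwin
      refine ⟨a + 1, ?_, ?_, ?_⟩
      · show (pos (p a) - (a + 1)).val < ℓ
        rw [hpos, hAB]; omega
      · show (pos (p (a + 1)) - (a + 1)).val < ℓ
        rw [hpos, sub_self, ZMod.val_zero]; omega
      · show (pos w - (a + 1)).val < ℓ
        rw [← hc, ← hd2]; omega
    have w2 : ¬ v < ℓ + d2 := by
      intro h
      apply notwin
      refine ⟨c, ?_, ?_, ?_⟩
      · show (pos (p a) - c).val < ℓ
        rw [hpos, ← hd3]; omega
      · show (pos (p (a + 1)) - c).val < ℓ
        rw [hpos, hBc]; omega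
      · show (pos w - c).val < ℓ
        rw [← hc, sub_self, ZMod.val_zero]; omega
    have w3 : ¬ v < ℓ + d3 := by
      intro h
      apply notwin
      refine ⟨a, ?_, ?_, ?_⟩
      · show (pos (p a) - a).val < ℓ
        rw [hpos, sub_self, ZMod.val_zero]; omega
      · show (pos (p (a + 1)) - a).val < ℓ
        rw [hpos, hv1]; omega
      · show (pos w - a).val < ℓ
        rw [← hc, hcA]; omega
    have hlv : ℓ < v := by omega
    have hd2m : d2 = m := by omega
    refine ⟨hlv, ?_⟩
    have hceq : c - (a + 1) = ((m : ℕ) : ZMod v) := by rw [← hcastd2, hd2m]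
    have hc2 : c = a + 1 + (m : ℕ) := by
      have h' := sub_eq_iff_eq_add.mp hceq
      rw [h']; ring
    rw [hw, hc2]
  -- key: the triple through each consecutive edge, in stored form
  have key : ∀ a : ZMod v, ℓ < v ∧ ∃ t ∈ T,
      t = (p a, p (a + 1), p (a + 1 + (m : ℕ))) ∨
      t = (p (a + 1 + (m : ℕ)), p a, p (a + 1)) ∨
      t = (p (a + 1), p (a + 1 + (m : ℕ)), p a) := by
    intro a
    have hne : p a ≠ p (a + 1) := by
      intro h
      have h2 := pos.symm.injective h
      exact one_ne_zero (left_eq_add.mp h2)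
    obtain ⟨t, ⟨htT, hte⟩, _⟩ := hT.2 (p a) (p (a + 1)) hne
    obtain ⟨x, y, z⟩ := t
    obtain ⟨hxy, hyz, hzx⟩ := hT.1 _ htT
    simp only at hxy hyz hzx
    rcases hte with h | h | h <;> simp only [Prod.mk.injEq] at h <;>
      obtain ⟨h1, h2⟩ := h
    · subst h1; subst h2
      have hcm : cmem (p a, p (a + 1), z) T := Or.inl htT
      obtain ⟨hlv, hz⟩ := main a z hcm hzx (Ne.symm hyz)
      subst hz
      exact ⟨hlv, _, htT, Or.inl rfl⟩
    · subst h1; subst h2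
      have hcm : cmem (p a, p (a + 1), x) T := Or.inr (Or.inr htT)
      obtain ⟨hlv, hx⟩ := main a x hcm hxy (Ne.symm hzx)
      subst hx
      exact ⟨hlv, _, htT, Or.inr (Or.inl rfl)⟩
    · subst h1; subst h2
      have hcm : cmem (p a, p (a + 1), y) T := Or.inr (Or.inl htT)
      obtain ⟨hlv, hy⟩ := main a y hcm hyz (Ne.symm hxy)
      subst hy
      exact ⟨hlv, _, htT, Or.inr (Or.inr rfl)⟩
  -- now derive the contradiction
  obtain ⟨hlv, t1, ht1T, ht1⟩ := key 0
  obtain ⟨_, t2, ht2T, ht2⟩ := key ((0 : ZMod v) + 1 + (m : ℕ))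
  have hm2 : 2 ≤ m := by omega
  have hvz : ((v : ℕ) : ZMod v) = 0 := ZMod.natCast_self v
  have hwrap : (0 : ZMod v) + 1 + (m : ℕ) + 1 + (m : ℕ) = (0 : ZMod v) + 1 := by
    have h2 : ((2 * m + 1 : ℕ) : ZMod v) = 0 := by rw [← hm]; exact hvz
    push_cast at h2 ⊢
    linear_combination h2
  rw [hwrap] at ht2
  -- uniqueness of the triple through the edge (p (0+1), p (0+1+m))
  have hcast_ne : ∀ n : ℕ, 0 < n → n < v → ((n : ℕ) : ZMod v) ≠ 0 := by
    intro n h1 h2 h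
    have := (ZMod.natCast_eq_zero_iff n v).mp h
    have := Nat.le_of_dvd h1 this
    omega
  have hne2 : p ((0 : ZMod v) + 1) ≠ p ((0 : ZMod v) + 1 + (m : ℕ)) := by
    intro h
    have h2 := pos.symm.injective h
    have h3 : ((m : ℕ) : ZMod v) = 0 := left_eq_add.mp h2
    exact hcast_ne m (by omega) (by omega) h3
  obtain ⟨u, _, huniq⟩ := hT.2 (p ((0 : ZMod v) + 1)) (p ((0 : ZMod v) + 1 + (m : ℕ))) hne2
  have e1 : edgeIn (p ((0 : ZMod v) + 1)) (p ((0 : ZMod v) + 1 + (m : ℕ))) t1 := by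
    rcases ht1 with h | h | h <;> subst h
    · exact Or.inr (Or.inl rfl)
    · exact Or.inr (Or.inr rfl)
    · exact Or.inl rfl
  have e2 : edgeIn (p ((0 : ZMod v) + 1)) (p ((0 : ZMod v) + 1 + (m : ℕ))) t2 := by
    rcases ht2 with h | h | h <;> subst h
    · exact Or.inr (Or.inr rfl)
    · exact Or.inl rfl
    · exact Or.inr (Or.inl rfl)
  have h12 : t1 = t2 := by
    rw [huniq t1 ⟨ht1T, e1⟩, huniq t2 ⟨ht2T, e2⟩]
  -- p 0 is a component of t1 = t2, whose components are p (0+1+m), p (0+1+m+1), p (0+1)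
  have hmem : p (0 : ZMod v) = p ((0 : ZMod v) + 1 + (m : ℕ)) ∨
      p (0 : ZMod v) = p ((0 : ZMod v) + 1 + (m : ℕ) + 1) ∨
      p (0 : ZMod v) = p ((0 : ZMod v) + 1) := by
    rcases ht1 with h | h | h <;> rcases ht2 with h' | h' | h' <;>
      rw [h, h'] at h12 <;> simp only [Prod.mk.injEq] at h12 <;> tauto
  have hinj : ∀ b : ZMod v, p (0 : ZMod v) = p b → (0 : ZMod v) = b :=
    fun b h => pos.symm.injective h
  rcases hmem with h | h | h
  · have h2 := hinj _ h
    have h3 : ((m + 1 : ℕ) : ZMod v) = 0 := by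
      push_cast
      linear_combination -h2
    exact hcast_ne (m + 1) (by omega) (by omega) h3
  · have h2 := hinj _ h
    have h3 : ((m + 2 : ℕ) : ZMod v) = 0 := by
      push_cast
      linear_combination -h2
    exact hcast_ne (m + 2) (by omega) (by omega) h3
  · have h2 := hinj _ h
    have h3 : ((1 : ℕ) : ZMod v) = 0 := by
      push_cast
      linear_combination -h2
    exact hcast_ne 1 (by omega) (by omega) h3
end

section
/- If a Mendelsohn triple system of order v has an ℓ-good sequencing, then ℓ ≤ ⌊(v−1)/2⌋. -/
section Aux

variable {X : Type*} [DecidableEq X] {v : ℕ} (T : Finset (X × X × X)) (pos : X ≃ ZMod v)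

/-- cyclic membership in `T` of the triple at positions `a b c`. -/
def M3 (a b c : ZMod v) : Prop :=
  cmem (pos.symm a, pos.symm b, pos.symm c) T

variable {T pos}

lemma M3.rot {a b c : ZMod v} (h : M3 T pos a b c) : M3 T pos b c a := by
  unfold M3 cmem rotT at *
  dsimp at *
  tauto

lemma M3_unique (hT : isMTS T) {a b c c' : ZMod v} (hab : a ≠ b)
    (h : M3 T pos a b c) (h' : M3 T pos a b c') : c = c' := by
  have key : ∀ {z : ZMod v}, M3 T pos a b z →
      ∃ t, (t ∈ T ∧ edgeIn (pos.symm a) (pos.symm b) t) ∧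
        (t = (pos.symm a, pos.symm b, pos.symm z) ∨
         t = (pos.symm b, pos.symm z, pos.symm a) ∨
         t = (pos.symm z, pos.symm a, pos.symm b)) := by
    intro z hz
    unfold M3 cmem rotT at hz
    dsimp at hz
    rcases hz with hz | hz | hz
    · exact ⟨_, ⟨hz, Or.inl rfl⟩, Or.inl rfl⟩
    · exact ⟨_, ⟨hz, Or.inr (Or.inr rfl)⟩, Or.inr (Or.inl rfl)⟩
    · exact ⟨_, ⟨hz, Or.inr (Or.inl rfl)⟩, Or.inr (Or.inr rfl)⟩
  have hAB : pos.symm a ≠ pos.symm b := fun e => hab (pos.symm.injective e)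
  obtain ⟨t, ht, hc⟩ := key h
  obtain ⟨t', ht', hc'⟩ := key h'
  have htt : t = t' := by
    obtain ⟨u, hu, huniq⟩ := hT.2 _ _ hAB
    rw [huniq t ht, huniq t' ht']
  subst htt
  have inj : ∀ {x y : ZMod v}, pos.symm x = pos.symm y → x = y :=
    fun e => pos.symm.injective e
  rcases hc with h1 | h1 | h1 <;> rcases hc' with h2 | h2 | h2 <;>
    (rw [h1] at h2
     have e1 := congrArg Prod.fst h2
     have e2 := congrArg (fun p => p.2.1) h2
     have e3 := congrArg (fun p => p.2.2) h2
     dsimp at e1 e2 e3) <;>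
    first
      | exact inj e1
      | exact inj e2
      | exact inj e3
      | exact absurd (inj e1) hab
      | exact absurd (inj e2) hab
      | exact absurd (inj e3) hab
      | exact absurd (inj e1).symm hab
      | exact absurd (inj e2).symm hab
      | exact absurd (inj e3).symm hab

lemma exists_third (hT : isMTS T) {a b : ZMod v} (hab : a ≠ b) :
    ∃ c : ZMod v, M3 T pos a b c ∧ c ≠ a ∧ c ≠ b := by
  have hAB : pos.symm a ≠ pos.symm b := fun e => hab (pos.symm.injective e)
  obtain ⟨t, ⟨htT, hedge⟩, _⟩ := hT.2 _ _ hAB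
  obtain ⟨hd1, hd2, hd3⟩ := hT.1 t htT
  rcases hedge with he | he | he <;>
    simp only [Prod.mk.injEq] at he
  · -- t = (A, B, t.2.2)
    refine ⟨pos t.2.2, ?_, ?_, ?_⟩
    · left
      show (pos.symm a, pos.symm b, pos.symm (pos t.2.2)) ∈ T
      rw [Equiv.symm_apply_apply, he.1, he.2]
      exact htT
    · intro e
      apply hd3
      have : pos.symm (pos t.2.2) = pos.symm a := congrArg _ e
      rw [Equiv.symm_apply_apply] at this
      rw [this, he.1]
    · intro e
      apply hd2
      have : pos.symm (pos t.2.2) = pos.symm b := congrArg _ e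
      rw [Equiv.symm_apply_apply] at this
      rw [this, he.2]
  · -- (a,b) = (t.2.1, t.2.2) : t = (t.1, A, B), triple (A,B,t.1): rot² of t... 
    refine ⟨pos t.1, ?_, ?_, ?_⟩
    · right; right
      show rotT (rotT (pos.symm a, pos.symm b, pos.symm (pos t.1))) ∈ T
      unfold rotT
      dsimp
      rw [Equiv.symm_apply_apply, he.1, he.2]
      exact htT
    · intro e
      apply hd1
      have : pos.symm (pos t.1) = pos.symm a := congrArg _ e
      rw [Equiv.symm_apply_apply] at this
      rw [this, he.1]
    · intro e
      apply hd3
      have : pos.symm (pos t.1) = pos.symm b := congrArg _ e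
      rw [Equiv.symm_apply_apply] at this
      rw [← he.2, this]
  · -- (a,b) = (t.2.2, t.1) : triple (A, B, t.2.1): rot of it is t
    refine ⟨pos t.2.1, ?_, ?_, ?_⟩
    · right; left
      show rotT (pos.symm a, pos.symm b, pos.symm (pos t.2.1)) ∈ T
      unfold rotT
      dsimp
      rw [Equiv.symm_apply_apply, he.1, he.2]
      exact htT
    · intro e
      apply hd2
      have : pos.symm (pos t.2.1) = pos.symm a := congrArg _ e
      rw [Equiv.symm_apply_apply] at this
      rw [this, he.1]
    · intro e
      apply hd1
      have : pos.symm (pos t.2.1) = pos.symm b := congrArg _ e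
      rw [Equiv.symm_apply_apply] at this
      rw [this, ← he.2]

lemma no_window {ℓ : ℕ} (hgood : isGood pos ℓ T) {a b c : ZMod v}
    (h : M3 T pos a b c) (hcont : (b - a).val < (c - a).val) {s : ZMod v}
    (h1 : (a - s).val < ℓ) (h2 : (b - s).val < ℓ) (h3 : (c - s).val < ℓ) : False := by
  refine hgood (pos.symm a, pos.symm b, pos.symm c) h ⟨?_, s, ?_, ?_, ?_⟩ <;>
    simp only [containedIn, Equiv.apply_symm_apply] <;>
    assumption


lemma val_eq_cast [NeZero v] {x : ZMod v} {m : ℕ} (h : x.val = m) : x = (m : ZMod v) := by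
  rw [← h, ZMod.natCast_zmod_val]

lemma cast_nonzero [NeZero v] {m : ℕ} (h0 : 0 < m) (hv : m < v) : (m : ZMod v) ≠ 0 := by
  intro h
  rw [ZMod.natCast_eq_zero_iff] at h
  have := Nat.le_of_dvd h0 h
  omega

lemma third_bounds [NeZero v] {ℓ : ℕ} (hT : isMTS T) (hgood : isGood pos ℓ T)
    {a b : ZMod v} {g : ℕ} (hg : b = a + (g : ZMod v)) (hg1 : 1 ≤ g) (hgl : g + 1 ≤ ℓ)
    (hgv : g < v) :
    ∃ c : ZMod v, M3 T pos a b c ∧ (c - a).val < v ∧ 1 ≤ (c - a).val ∧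
      ((c - a).val < g ∨ (ℓ ≤ (c - a).val ∧ (c - a).val + ℓ ≤ v + g)) := by
  have hba : b - a = (g : ZMod v) := by rw [hg]; ring
  have hgval : ((g : ZMod v)).val = g := ZMod.val_cast_of_lt hgv
  have hab : a ≠ b := by
    intro h
    rw [h] at hba
    simp only [sub_self] at hba
    exact cast_nonzero hg1 hgv hba.symm
  obtain ⟨c, hM, hca, hcb⟩ := exists_third hT hab
  set e := (c - a).val with hedef
  have hev : e < v := ZMod.val_lt _
  have he0 : e ≠ 0 := by
    intro h
    apply hca
    have : c - a = 0 := by rw [← ZMod.natCast_zmod_val (c - a), ← hedef, h, Nat.cast_zero]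
    exact sub_eq_zero.mp this
  have heg : e ≠ g := by
    intro h
    apply hcb
    have h1 : c - a = (g : ZMod v) := by
      rw [← ZMod.natCast_zmod_val (c - a), ← hedef, h]
    rw [← hba] at h1
    exact sub_left_injective.eq_iff.mp h1
  refine ⟨c, hM, hev, by omega, ?_⟩
  by_cases hlt : e < g
  · exact Or.inl hlt
  · have hge : g < e := by omega
    have hcont : (b - a).val < (c - a).val := by rw [hba, hgval]; exact hge
    have hle : ℓ ≤ e := by
      by_contra h
      exact no_window hgood hM hcont (s := a)
        (by simp only [sub_self, ZMod.val_zero]; omega)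
        (by rw [hba, hgval]; omega) (by rw [← hedef]; omega)
    refine Or.inr ⟨hle, ?_⟩
    by_contra h'
    push_neg at h'
    have hac : (a - c).val = v - e := by
      have : a - c = -(c - a) := by ring
      rw [this, ZMod.neg_val, if_neg (fun hh => he0 (by rw [hedef, hh, ZMod.val_zero]))]
    have hbc : (b - c).val < ℓ := by
      have : b - c = (a - c) + (g : ZMod v) := by rw [hg]; ring
      rw [this, ZMod.val_add]
      calc ((a-c).val + ((g : ZMod v)).val) % v ≤ (a-c).val + ((g : ZMod v)).val :=
            Nat.mod_le _ _
        _ < ℓ := by rw [hac, hgval]; omega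
    exact no_window hgood hM hcont (s := c)
      (by rw [hac]; omega) hbc
      (by simp only [sub_self, ZMod.val_zero]; omega)


lemma small_cast_inj [NeZero v] {m k : ℕ} (hm : m < v) (hk : k < v)
    (h : (m : ZMod v) = (k : ZMod v)) : m = k := by
  rw [← ZMod.val_cast_of_lt hm, ← ZMod.val_cast_of_lt hk, h]

end Aux

/-- If an MTS(`v`) has an `ℓ`-good sequencing (`ℓ ≥ 3`), then `ℓ ≤ ⌊(v-1)/2⌋`. -/
theorem good_sequencing_bound {X : Type*} [Fintype X] [DecidableEq X] {v ℓ : ℕ}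
    (hX : Fintype.card X = v) (hv3 : 3 ≤ v) (hl3 : 3 ≤ ℓ)
    (T : Finset (X × X × X)) (hT : isMTS T) (pos : X ≃ ZMod v)
    (hgood : isGood pos ℓ T) :
    ℓ ≤ (v - 1) / 2 := by
  by_contra hcon
  push_neg at hcon
  haveI : NeZero v := ⟨by omega⟩
  have hv2l : v ≤ 2 * ℓ := by omega
  -- the triple on each adjacent pair has its third point "far away"
  have adj : ∀ i : ZMod v, ∃ c : ZMod v, M3 T pos i (i + 1) c ∧ (c - i).val < v ∧
      ℓ ≤ (c - i).val ∧ (c - i).val + ℓ ≤ v + 1 := by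
    intro i
    obtain ⟨c, hM, h1, h2, h3⟩ := third_bounds (a := i) (b := i + 1) (g := 1) hT hgood
      (by push_cast; ring) le_rfl (by omega) (by omega)
    rcases h3 with h | h
    · omega
    · exact ⟨c, hM, h1, h.1, h.2⟩
  have hub : 2 * ℓ ≤ v + 1 := by
    obtain ⟨c, _, _, h2, h3⟩ := adj 0
    omega
  have hlv : ℓ < v := by omega
  obtain ⟨L, hL⟩ : ∃ L : ZMod v, L = ((ℓ : ℕ) : ZMod v) := ⟨_, rfl⟩
  have hLval : L.val = ℓ := by rw [hL]; exact ZMod.val_cast_of_lt hlv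
  rcases (by omega : 2 * ℓ = v + 1 ∨ 2 * ℓ = v) with hv | hv
  · -- case v = 2ℓ - 1 : third point always at distance exactly ℓ
    have hDall : ∀ i : ZMod v, M3 T pos i (i + 1) (i + L) := by
      intro i
      obtain ⟨c, hM, h1, h2, h3⟩ := adj i
      have he : (c - i).val = ℓ := by omega
      have hc : c = i + L := by
        have := val_eq_cast he
        rw [hL]
        linear_combination this
      rwa [hc] at hM
    have hLL : L + L = 1 := by
      have h2 : ((2 * ℓ : ℕ) : ZMod v) = ((v + 1 : ℕ) : ZMod v) := by rw [hv]
      push_cast at h2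
      rw [ZMod.natCast_self] at h2
      rw [hL]
      linear_combination h2
    have A1 : M3 T pos 0 1 L := by
      have := hDall 0
      rwa [zero_add, zero_add] at this
    have A2 : M3 T pos L (L + 1) 1 := by
      have := hDall L
      rwa [hLL] at this
    have h1L : (1 : ZMod v) ≠ L := by
      intro h
      have : ((1 : ℕ) : ZMod v) = ((ℓ : ℕ) : ZMod v) := by push_cast; rw [← hL]; exact h
      have := small_cast_inj (by omega) hlv this
      omega
    have key : (0 : ZMod v) = L + 1 := M3_unique hT h1L A1.rot A2.rot.rot
    have : ((0 : ℕ) : ZMod v) = ((ℓ + 1 : ℕ) : ZMod v) := by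
      push_cast
      rw [← hL]
      linear_combination key
    have := small_cast_inj (by omega) (by omega) this
    omega
  · -- case v = 2ℓ
    choose c hM hv1 hl1 hl2 using adj
    have hval : ∀ i : ZMod v, (c i - i).val = ℓ ∨ (c i - i).val = ℓ + 1 := by
      intro i
      have := hl1 i
      have := hl2 i
      omega
    have hLL0 : L + L = 0 := by
      have h2 : ((2 * ℓ : ℕ) : ZMod v) = ((v : ℕ) : ZMod v) := by rw [hv]
      push_cast at h2
      rw [ZMod.natCast_self] at h2
      rw [hL]
      linear_combination h2
    have hM0 : ∀ i : ZMod v, (c i - i).val = ℓ → M3 T pos i (i + 1) (i + L) := by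
      intro i h
      have hc : c i = i + L := by
        have := val_eq_cast h
        rw [hL]
        linear_combination this
      have := hM i
      rwa [hc] at this
    have hM1 : ∀ i : ZMod v, (c i - i).val ≠ ℓ → M3 T pos i (i + 1) (i + L + 1) := by
      intro i h
      have h' : (c i - i).val = ℓ + 1 := by rcases hval i with h2 | h2 <;> omega
      have hc : c i = i + L + 1 := by
        have := val_eq_cast h'
        push_cast at this
        rw [hL]
        linear_combination this
      have := hM i
      rwa [hc] at this
    -- nonzero helpers
    have hLne0 : L ≠ 0 := by
      intro h
      have : ((ℓ : ℕ) : ZMod v) = ((0 : ℕ) : ZMod v) := by push_cast; rw [← hL]; exact h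
      have := small_cast_inj hlv (by omega) this
      omega
    have hLne1 : L ≠ 1 := by
      intro h
      have : ((ℓ : ℕ) : ZMod v) = ((1 : ℕ) : ZMod v) := by push_cast; rw [← hL]; exact h
      have := small_cast_inj hlv (by omega) this
      omega
    have hL1ne0 : L + 1 ≠ 0 := by
      intro h
      have : ((ℓ + 1 : ℕ) : ZMod v) = ((0 : ℕ) : ZMod v) := by
        push_cast; rw [← hL]; linear_combination h
      have := small_cast_inj (by omega) (by omega) this
      omega
    have hL2ne0 : L + 2 ≠ 0 := by
      intro h
      have : ((ℓ + 2 : ℕ) : ZMod v) = ((0 : ℕ) : ZMod v) := by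
        push_cast; rw [← hL]; linear_combination h
      have := small_cast_inj (by omega) (by omega) this
      omega
    -- propagation steps
    have step1 : ∀ i : ZMod v, (c i - i).val = ℓ → (c (i + L) - (i + L)).val = ℓ := by
      intro i hPi
      by_contra hQ
      have T1 := hM0 i hPi
      have T2 := hM1 (i + L) hQ
      rw [show i + L + L + 1 = i + 1 from by linear_combination hLL0] at T2
      have hne : i + 1 ≠ i + L := by
        intro h
        exact hLne1 (by linear_combination -h)
      have key : i = i + L + 1 := M3_unique hT hne T1.rot T2.rot.rot
      exact hL1ne0 (by linear_combination -key)
    have step1' : ∀ i : ZMod v, (c i - i).val ≠ ℓ → (c (i + L) - (i + L)).val ≠ ℓ := by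
      intro i hQ hP'
      have T1 := hM1 i hQ
      have T2 := hM0 (i + L) hP'
      rw [show i + L + L = i from by linear_combination hLL0] at T2
      have hne : i + L + 1 ≠ i := by
        intro h
        exact hL1ne0 (by linear_combination h)
      have key : i + 1 = i + L := M3_unique hT hne T1.rot.rot T2.rot
      exact hLne1 (by linear_combination -key)
    have stepdown : ∀ i : ZMod v, (c i - i).val = ℓ → (c (i - 1) - (i - 1)).val = ℓ := by
      intro i hPi
      by_contra hQ
      have hPL := step1 i hPi
      have T1 := hM1 (i - 1) hQ
      rw [show i - 1 + 1 = i from by ring, show i - 1 + L + 1 = i + L from by ring] at T1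
      have T2 := hM0 (i + L) hPL
      rw [show i + L + L = i from by linear_combination hLL0] at T2
      have hne : i ≠ i + L := by
        intro h
        exact hLne0 (by linear_combination -h)
      have key : i - 1 = i + L + 1 := M3_unique hT hne T1.rot T2.rot.rot
      exact hL2ne0 (by linear_combination -key)
    have stepup : ∀ i : ZMod v, (c i - i).val ≠ ℓ → (c (i + 1) - (i + 1)).val ≠ ℓ := by
      intro i hQ hP1
      have hQL := step1 (i + 1) hP1
      have T1 := hM1 i hQ
      have T3 := hM0 (i + 1 + L) hQL
      rw [show i + 1 + L + L = i + 1 from by linear_combination hLL0,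
        show i + 1 + L = i + L + 1 from by ring] at T3
      rw [show i + L + 1 + 1 = i + L + 2 from by ring] at T3
      have hne : i + 1 ≠ i + L + 1 := by
        intro h
        exact hLne0 (by linear_combination -h)
      have key : i = i + L + 2 := M3_unique hT hne T1.rot T3.rot.rot
      exact hL2ne0 (by linear_combination -key)
    -- the distance function is constant
    by_cases hP0 : (c 0 - 0).val = ℓ
    · -- all triples are (i, i+1, i+ℓ)
      have hall : ∀ i : ZMod v, (c i - i).val = ℓ := by
        have hn : ∀ n : ℕ, (c (-(n : ZMod v)) - (-(n : ZMod v))).val = ℓ := by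
          intro n
          induction n with
          | zero => rw [show -((0 : ℕ) : ZMod v) = 0 from by push_cast; ring]; exact hP0
          | succ k ih =>
            have := stepdown _ ih
            rwa [show -((k : ℕ) : ZMod v) - 1 = -(((k + 1 : ℕ) : ℕ) : ZMod v) from by
              push_cast; ring] at this
        intro i
        have := hn (-i).val
        rwa [ZMod.natCast_zmod_val, neg_neg] at this
      have hF : ∀ i : ZMod v, M3 T pos i (i + 1) (i + L) := fun i => hM0 i (hall i)
      by_cases hl4 : 4 ≤ ℓ
      · -- generic case ℓ ≥ 4 : the triple on (a, a+2) must be (a, a+2, a+1)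
        have hL3ne0 : L + 3 ≠ 0 := by
          intro h
          have : ((ℓ + 3 : ℕ) : ZMod v) = ((0 : ℕ) : ZMod v) := by
            push_cast; rw [← hL]; linear_combination h
          have := small_cast_inj (by omega) (by omega) this
          omega
        have h1ne0 : ∀ x : ZMod v, x + 1 ≠ x := by
          intro x h
          have : ((1 : ℕ) : ZMod v) = ((0 : ℕ) : ZMod v) := by push_cast; linear_combination h
          have := small_cast_inj (by omega) (by omega) this
          omega
        have probe : ∀ a : ZMod v, M3 T pos a (a + 2) (a + 1) := by
          intro a
          obtain ⟨c', hM', hv', h1', h3'⟩ := third_bounds (a := a) (b := a + 2) (g := 2) hT hgood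
            (by push_cast; ring) (by omega) (by omega) (by omega)
          rcases h3' with hlt | ⟨hge, hle⟩
          · have he : (c' - a).val = 1 := by omega
            have hc : c' = a + 1 := by
              have := val_eq_cast he
              push_cast at this
              linear_combination this
            rwa [hc] at hM'
          · exfalso
            rcases (by omega : (c' - a).val = ℓ ∨ (c' - a).val = ℓ + 1 ∨ (c' - a).val = ℓ + 2)
              with he | he | he
            · have hc : c' = a + L := by
                have := val_eq_cast he
                rw [hL]
                linear_combination this
              rw [hc] at hM'
              have F := hF a
              have hne : a + L ≠ a := fun h => hLne0 (by linear_combination h)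
              have key : a + 2 = a + 1 := M3_unique hT hne hM'.rot.rot F.rot.rot
              exact h1ne0 (a + 1) (by linear_combination key)
            · have hc : c' = a + L + 1 := by
                have := val_eq_cast he
                push_cast at this
                rw [hL]
                linear_combination this
              rw [hc] at hM'
              have F := hF (a + 1)
              rw [show a + 1 + 1 = a + 2 from by ring,
                show a + 1 + L = a + L + 1 from by ring] at F
              have hne : a + 2 ≠ a + L + 1 := by
                intro h
                exact hLne1 (by linear_combination -h)
              have key : a = a + 1 := M3_unique hT hne hM'.rot F.rot
              exact h1ne0 a key.symm
            · have hc : c' = a + L + 2 := by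
                have := val_eq_cast he
                push_cast at this
                rw [hL]
                linear_combination this
              rw [hc] at hM'
              have F := hF (a + L + 2)
              rw [show a + L + 2 + 1 = a + L + 3 from by ring,
                show a + L + 2 + L = a + 2 from by linear_combination hLL0] at F
              have hne : a + 2 ≠ a + L + 2 := by
                intro h
                exact hLne0 (by linear_combination -h)
              have key : a = a + L + 3 := M3_unique hT hne hM'.rot F.rot.rot
              exact hL3ne0 (by linear_combination -key)
        have G0 := probe 0
        rw [zero_add, zero_add] at G0
        have G1 := probe 1
        rw [show (1 : ZMod v) + 2 = 3 from by ring, show (1 : ZMod v) + 1 = 2 from by ring] at G1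
        have hne : (2 : ZMod v) ≠ 1 := by
          intro h
          have : ((1 : ℕ) : ZMod v) = ((0 : ℕ) : ZMod v) := by push_cast; linear_combination h
          have := small_cast_inj (by omega) (by omega) this
          omega
        have key : (0 : ZMod v) = 3 := M3_unique hT hne G0.rot G1.rot.rot
        have : ((0 : ℕ) : ZMod v) = ((3 : ℕ) : ZMod v) := by push_cast; linear_combination key
        have := small_cast_inj (by omega) (by omega) this
        omega
      · -- small case ℓ = 3, v = 6
        have hv6 : v = 6 := by omega
        have hl3' : ℓ = 3 := by omega
        subst hv6
        subst hl3'
        have hL3 : L = 3 := by rw [hL]; decide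
        obtain ⟨cH, hH, h1H, h0H⟩ := exists_third (pos := pos) (a := 1) (b := 0) hT (by decide)
        rcases (by decide : ∀ z : ZMod 6, z ≠ 1 → z ≠ 0 → z = 2 ∨ z = 3 ∨ z = 4 ∨ z = 5)
          cH h1H h0H with hcc | hcc | hcc | hcc <;> rw [hcc] at hH
        · have F5 := hF 5
          rw [hL3, show (5 : ZMod 6) + 1 = 0 from by decide,
            show (5 : ZMod 6) + 3 = 2 from by decide] at F5
          have key : (1 : ZMod 6) = 5 := M3_unique hT (by decide) hH.rot F5.rot
          exact absurd key (by decide)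
        · have F3 := hF 3
          rw [hL3, show (3 : ZMod 6) + 1 = 4 from by decide,
            show (3 : ZMod 6) + 3 = 0 from by decide] at F3
          have key : (1 : ZMod 6) = 4 := M3_unique hT (by decide) hH.rot F3.rot.rot
          exact absurd key (by decide)
        · have F1 := hF 1
          rw [hL3, show (1 : ZMod 6) + 1 = 2 from by decide,
            show (1 : ZMod 6) + 3 = 4 from by decide] at F1
          have key : (0 : ZMod 6) = 2 := M3_unique hT (by decide) hH.rot.rot F1.rot.rot
          exact absurd key (by decide)
        · have F4 := hF 4
          rw [hL3, show (4 : ZMod 6) + 1 = 5 from by decide,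
            show (4 : ZMod 6) + 3 = 1 from by decide] at F4
          have key : (0 : ZMod 6) = 4 := M3_unique hT (by decide) hH.rot.rot F4.rot
          exact absurd key (by decide)
    · -- all triples are (i, i+1, i+ℓ+1)
      have hall : ∀ i : ZMod v, (c i - i).val ≠ ℓ := by
        have hn : ∀ n : ℕ, (c ((n : ZMod v)) - ((n : ZMod v))).val ≠ ℓ := by
          intro n
          induction n with
          | zero => rw [Nat.cast_zero]; exact hP0
          | succ k ih =>
            have := stepup _ ih
            rwa [show ((k : ℕ) : ZMod v) + 1 = (((k + 1 : ℕ) : ℕ) : ZMod v) from by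
              push_cast; ring] at this
        intro i
        have := hn i.val
        rwa [ZMod.natCast_zmod_val] at this
      have hF : ∀ i : ZMod v, M3 T pos i (i + 1) (i + L + 1) := fun i => hM1 i (hall i)
      by_cases hl4 : 4 ≤ ℓ
      · have h1ne0 : ∀ x : ZMod v, x + 1 ≠ x := by
          intro x h
          have : ((1 : ℕ) : ZMod v) = ((0 : ℕ) : ZMod v) := by push_cast; linear_combination h
          have := small_cast_inj (by omega) (by omega) this
          omega
        have probe : ∀ a : ZMod v, M3 T pos a (a + 2) (a + 1) := by
          intro a
          obtain ⟨c', hM', hv', h1', h3'⟩ := third_bounds (a := a) (b := a + 2) (g := 2) hT hgood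
            (by push_cast; ring) (by omega) (by omega) (by omega)
          rcases h3' with hlt | ⟨hge, hle⟩
          · have he : (c' - a).val = 1 := by omega
            have hc : c' = a + 1 := by
              have := val_eq_cast he
              push_cast at this
              linear_combination this
            rwa [hc] at hM'
          · exfalso
            rcases (by omega : (c' - a).val = ℓ ∨ (c' - a).val = ℓ + 1 ∨ (c' - a).val = ℓ + 2)
              with he | he | he
            · have hc : c' = a + L := by
                have := val_eq_cast he
                rw [hL]
                linear_combination this
              rw [hc] at hM'
              have F := hF (a + L - 1)
              rw [show a + L - 1 + 1 = a + L from by ring,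
                show a + L - 1 + L + 1 = a from by linear_combination hLL0] at F
              have hne : a + L ≠ a := fun h => hLne0 (by linear_combination h)
              have key : a + 2 = a + L - 1 := M3_unique hT hne hM'.rot.rot F.rot
              have : ((ℓ : ℕ) : ZMod v) = ((3 : ℕ) : ZMod v) := by
                push_cast
                rw [← hL]
                linear_combination -key
              have := small_cast_inj hlv (by omega) this
              omega
            · have hc : c' = a + L + 1 := by
                have := val_eq_cast he
                push_cast at this
                rw [hL]
                linear_combination this
              rw [hc] at hM'
              have F := hF (a + L + 1)
              rw [show a + L + 1 + 1 = a + L + 2 from by ring,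
                show a + L + 1 + L + 1 = a + 2 from by linear_combination hLL0] at F
              have hne : a + 2 ≠ a + L + 1 := by
                intro h
                exact hLne1 (by linear_combination -h)
              have key : a = a + L + 2 := M3_unique hT hne hM'.rot F.rot.rot
              exact hL2ne0 (by linear_combination -key)
            · have hc : c' = a + L + 2 := by
                have := val_eq_cast he
                push_cast at this
                rw [hL]
                linear_combination this
              rw [hc] at hM'
              have F := hF (a + 1)
              rw [show a + 1 + 1 = a + 2 from by ring,
                show a + 1 + L + 1 = a + L + 2 from by ring] at F
              have hne : a + 2 ≠ a + L + 2 := by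
                intro h
                exact hLne0 (by linear_combination -h)
              have key : a = a + 1 := M3_unique hT hne hM'.rot F.rot
              exact h1ne0 a key.symm
        have G0 := probe 0
        rw [zero_add, zero_add] at G0
        have G1 := probe 1
        rw [show (1 : ZMod v) + 2 = 3 from by ring, show (1 : ZMod v) + 1 = 2 from by ring] at G1
        have hne : (2 : ZMod v) ≠ 1 := by
          intro h
          have : ((1 : ℕ) : ZMod v) = ((0 : ℕ) : ZMod v) := by push_cast; linear_combination h
          have := small_cast_inj (by omega) (by omega) this
          omega
        have key : (0 : ZMod v) = 3 := M3_unique hT hne G0.rot G1.rot.rot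
        have : ((0 : ℕ) : ZMod v) = ((3 : ℕ) : ZMod v) := by push_cast; linear_combination key
        have := small_cast_inj (by omega) (by omega) this
        omega
      · -- small case ℓ = 3, v = 6
        have hv6 : v = 6 := by omega
        have hl3' : ℓ = 3 := by omega
        subst hv6
        subst hl3'
        have hL3 : L = 3 := by rw [hL]; decide
        obtain ⟨cH, hH, h1H, h0H⟩ := exists_third (pos := pos) (a := 1) (b := 0) hT (by decide)
        rcases (by decide : ∀ z : ZMod 6, z ≠ 1 → z ≠ 0 → z = 2 ∨ z = 3 ∨ z = 4 ∨ z = 5)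
          cH h1H h0H with hcc | hcc | hcc | hcc <;> rw [hcc] at hH
        · have F2 := hF 2
          rw [hL3, show (2 : ZMod 6) + 1 = 3 from by decide,
            show (2 : ZMod 6) + 3 + 1 = 0 from by decide] at F2
          have key : (1 : ZMod 6) = 3 := M3_unique hT (by decide) hH.rot F2.rot.rot
          exact absurd key (by decide)
        · have F5 := hF 5
          rw [hL3, show (5 : ZMod 6) + 1 = 0 from by decide,
            show (5 : ZMod 6) + 3 + 1 = 3 from by decide] at F5
          have key : (1 : ZMod 6) = 5 := M3_unique hT (by decide) hH.rot F5.rot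
          exact absurd key (by decide)
        · have F3 := hF 3
          rw [hL3, show (3 : ZMod 6) + 1 = 4 from by decide,
            show (3 : ZMod 6) + 3 + 1 = 1 from by decide] at F3
          have key : (0 : ZMod 6) = 3 := M3_unique hT (by decide) hH.rot.rot F3.rot
          exact absurd key (by decide)
        · have F1 := hF 1
          rw [hL3, show (1 : ZMod 6) + 1 = 2 from by decide,
            show (1 : ZMod 6) + 3 + 1 = 5 from by decide] at F1
          have key : (0 : ZMod 6) = 2 := M3_unique hT (by decide) hH.rot.rot F1.rot.rot
          exact absurd key (by decide)
end

section
/- Suppose v is odd, X = {0,1,...,v−1}, and D is the cyclic sequencing (0 1 ... v−1). If an MTS(v) on X has D as a ((v+1)/2)-good sequencing, then for every i, the triple (i, i+1, i+(v+1)/2) (arithmetic mod v) belongs to the triple set. Consequently no such MTS exists, since the triples (0,1,(v+1)/2) and ((v+1)/2,(v+3)/2,1) would both contain the directed edge (1,(v+1)/2). -/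
/-- Suppose `v` is odd, `X = ZMod v` and `D` is the identity sequencing
`(0 1 ⋯ v-1)`.  If an MTS(`v`) on `X` has `D` as a `((v+1)/2)`-good
sequencing, then every triple `(i, i+1, i+(v+1)/2)` (mod `v`) belongs to the
triple set; consequently no such MTS exists. -/
theorem odd_identity_forced_triples {v : ℕ} (hv : Odd v) (hv5 : 5 ≤ v)
    (T : Finset (ZMod v × ZMod v × ZMod v)) (hT : isMTS T)
    (hgood : isGood (Equiv.refl (ZMod v)) ((v + 1) / 2) T) :
    (∀ i : ZMod v, cmem (i, i + 1, i + (((v + 1) / 2 : ℕ) : ZMod v)) T) ∧ False := by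
  haveI : NeZero v := ⟨by omega⟩
  haveI : Fact (1 < v) := ⟨by omega⟩
  obtain ⟨k, hk⟩ := hv
  set ℓ : ℕ := (v + 1) / 2 with hℓdef
  have hℓ2 : 2 * ℓ = v + 1 := by omega
  have hℓ3 : 3 ≤ ℓ := by omega
  have hℓv : ℓ + 2 ≤ v := by omega
  set L : ZMod v := ((ℓ : ℕ) : ZMod v) with hLdef
  have hLval : L.val = ℓ := ZMod.val_cast_of_lt (by omega)
  have hv1 : (1 : ZMod v).val = 1 := ZMod.val_one v
  have hv0 : (0 : ZMod v).val = 0 := ZMod.val_zero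
  have hvL1 : (L + 1).val = ℓ + 1 := by
    have : L + 1 = (((ℓ + 1 : ℕ)) : ZMod v) := by push_cast; ring
    rw [this, ZMod.val_cast_of_lt (by omega)]
  have hLL : L + L = 1 := by
    have : L + L = (((2 * ℓ : ℕ)) : ZMod v) := by push_cast; ring
    rw [this, hℓ2]; push_cast [ZMod.natCast_self]; ring
  have h10 : (1 : ZMod v) ≠ 0 := by
    intro h; rw [h, hv0] at hv1; exact one_ne_zero hv1.symm
  -- main claim
  have hmain : ∀ i : ZMod v, cmem (i, i + 1, i + L) T := by
    intro i
    have hne : i ≠ i + 1 := by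
      intro h; exact h10 (left_eq_add.mp h)
    have key : ∀ w : ZMod v, cmem (i, i + 1, w) T → w ≠ i → w ≠ i + 1 → w = i + L := by
      intro w hcm hw1 hw2
      by_contra hne'
      set a : ZMod v := w - i with hadef
      have ha0 : a ≠ 0 := sub_ne_zero.mpr hw1
      have hav0 : a.val ≠ 0 := fun h => ha0 ((ZMod.val_eq_zero a).mp h)
      have haself : ((a.val : ℕ) : ZMod v) = a := ZMod.natCast_rightInverse a
      have hav1 : a.val ≠ 1 := by
        intro h
        apply hw2
        have : a = 1 := by rw [← haself, h, Nat.cast_one]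
        rw [hadef] at this
        rw [sub_eq_iff_eq_add.mp this]; ring
      have havL : a.val ≠ ℓ := by
        intro h
        apply hne'
        have : a = L := by rw [← haself, h]
        rw [hadef] at this
        rw [sub_eq_iff_eq_add.mp this]; ring
      have havlt : a.val < v := ZMod.val_lt a
      apply hgood (i, i + 1, w) hcm
      constructor
      · show ((Equiv.refl (ZMod v)) (i+1) - (Equiv.refl (ZMod v)) i).val < _
        simp only [Equiv.refl_apply, add_sub_cancel_left, hv1]
        rw [← hadef]
        omega
      · -- inWindow
        rcases lt_or_ge a.val ℓ with hc | hc
        · refine ⟨i, ?_, ?_, ?_⟩ <;> simp only [Equiv.refl_apply]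
          · rw [sub_self, hv0]; omega
          · rw [add_sub_cancel_left, hv1]; omega
          · exact hc
        · have hcc : ℓ + 1 ≤ a.val := by omega
          have hnegval : (-a).val = v - a.val := by
            rw [ZMod.neg_val, if_neg ha0]
          have ham1 : (a - 1).val = a.val - 1 := by
            have : a - 1 = (((a.val - 1 : ℕ)) : ZMod v) := by
              rw [Nat.cast_sub (by omega), Nat.cast_one, haself]
            rw [this, ZMod.val_cast_of_lt (by omega)]
          have ham10 : a - 1 ≠ 0 := by
            intro h
            have := (ZMod.val_eq_zero (a-1)).mpr h
            omega
          have hnegval2 : (-(a - 1)).val = v - (a.val - 1) := by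
            rw [ZMod.neg_val, if_neg ham10, ham1]
          refine ⟨w, ?_, ?_, ?_⟩ <;> simp only [Equiv.refl_apply]
          · have : i - w = -a := by rw [hadef]; ring
            rw [this, hnegval]; omega
          · have : i + 1 - w = -(a - 1) := by rw [hadef]; ring
            rw [this, hnegval2]; omega
          · rw [sub_self, hv0]; omega
    obtain ⟨t, ⟨htT, hedge⟩, _⟩ := hT.2 i (i + 1) hne
    obtain ⟨x, y, z⟩ := t
    obtain ⟨d1, d2, d3⟩ := hT.1 (x, y, z) htT
    simp only at d1 d2 d3
    rcases hedge with h | h | h <;>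
      simp only [Prod.mk.injEq] at h <;> obtain ⟨h1, h2⟩ := h
    · -- x = i, y = i+1
      subst h1; subst h2
      have hcm : cmem (i, i + 1, z) T := Or.inl htT
      exact key z hcm d3 (Ne.symm d2) ▸ hcm
    · -- y = i, z = i+1
      subst h1; subst h2
      have hcm : cmem (i, i + 1, x) T := Or.inr (Or.inr htT)
      exact key x hcm d1 (Ne.symm d3) ▸ hcm
    · -- z = i, x = i+1
      subst h1; subst h2
      have hcm : cmem (i, i + 1, y) T := Or.inr (Or.inl htT)
      exact key y hcm d2 (Ne.symm d1) ▸ hcm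
  refine ⟨hmain, ?_⟩
  -- contradiction
  have h0 := hmain 0
  have hL := hmain L
  rw [show (0 : ZMod v) + 1 = 1 by ring, show (0 : ZMod v) + L = L by ring] at h0
  rw [show L + L = 1 from hLL] at hL
  have h1L : (1 : ZMod v) ≠ L := by
    intro h; rw [← h, hv1] at hLval; omega
  obtain ⟨t, _, huq⟩ := hT.2 1 L h1L
  simp only [cmem, rotT] at h0 hL
  rcases h0 with h0 | h0 | h0 <;> rcases hL with hL | hL | hL <;>
  · have e := (huq _ ⟨h0, by simp [edgeIn]⟩).trans (huq _ ⟨hL, by simp [edgeIn]⟩).symm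
    have e' := congrArg (fun t : ZMod v × ZMod v × ZMod v => (t.1.val, t.2.1.val, t.2.2.val)) e
    simp only [hv0, hv1, hLval, hvL1, Prod.mk.injEq] at e'
    omega
end

section
/- Suppose v is even, X = {0,...,v−1}, T is the triple set of an MTS(v) on X, and the identity cyclic ordering D = (0 1 ... v−1) is (v/2)-good. Then for each i ∈ Z_v, exactly one of the triples R_i = (i, i+1, i+v/2) and S_i = (i, i+1, i+1+v/2) (arithmetic mod v) belongs to T; moreover either all R_i belong to T or all S_i belong to T. -/
section Helpers
variable {X : Type*} [DecidableEq X] {T : Finset (X × X × X)}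

lemma cmem_rot {t : X × X × X} (h : cmem t T) : cmem (rotT t) T := by
  rcases h with h | h | h
  · exact Or.inr (Or.inr h)
  · exact Or.inl h
  · exact Or.inr (Or.inl h)

lemma cmem_edge' {a b p : X} (h : cmem (a, b, p) T) :
    ∃ u, u ∈ T ∧ edgeIn a b u ∧ (u = (a, b, p) ∨ u = (b, p, a) ∨ u = (p, a, b)) := by
  rcases h with h | h | h
  · exact ⟨_, h, Or.inl rfl, Or.inl rfl⟩
  · exact ⟨_, h, Or.inr (Or.inr rfl), Or.inr (Or.inl rfl)⟩
  · exact ⟨_, h, Or.inr (Or.inl rfl), Or.inr (Or.inr rfl)⟩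

lemma shared_edge (hT : isMTS T) {a b p q : X}
    (hab : a ≠ b) (hpa : p ≠ a) (hpb : p ≠ b) (hqa : q ≠ a) (hqb : q ≠ b)
    (hp : cmem (a, b, p) T) (hq : cmem (a, b, q) T) : p = q := by
  obtain ⟨u₁, hu₁T, hu₁e, hc₁⟩ := cmem_edge' hp
  obtain ⟨u₂, hu₂T, hu₂e, hc₂⟩ := cmem_edge' hq
  obtain ⟨t, -, hun⟩ := hT.2 a b hab
  have h12 : u₁ = u₂ := (hun u₁ ⟨hu₁T, hu₁e⟩).trans (hun u₂ ⟨hu₂T, hu₂e⟩).symm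
  rw [h12] at hc₁
  rcases hc₁ with h1 | h1 | h1 <;> rcases hc₂ with h2 | h2 | h2 <;>
    [skip; skip; skip; skip; skip; skip; skip; skip; skip] <;>
    (have h3 := h1.symm.trans h2; simp only [Prod.mk.injEq, and_true, true_and] at h3) <;>
    first
      | exact h3
      | exact absurd h3.1 hab
      | exact absurd h3.1 hpa
      | exact absurd h3.1 hpb
      | exact absurd h3.1.symm hab
      | exact absurd h3.2.1.symm hab
      | exact absurd h3.2.1 hpa

end Helpers

section ZHelpers
variable {v : ℕ} [NeZero v]

lemma shift_sub (i : ZMod v) (c₁ c₂ : ℕ) (h₂ : c₂ ≤ v) :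
    (i + (c₁ : ZMod v)) - (i + (c₂ : ZMod v)) = ((c₁ + (v - c₂) : ℕ) : ZMod v) := by
  have h : ((c₁ + (v - c₂) : ℕ) : ZMod v) = (c₁ : ZMod v) + (((v : ℕ) : ZMod v) - (c₂ : ZMod v)) := by
    push_cast [h₂]; ring
  rw [h, ZMod.natCast_self]; ring

lemma shift_sub_val (i : ZMod v) (c₁ c₂ : ℕ) (h₂ : c₂ ≤ v) :
    ((i + (c₁ : ZMod v)) - (i + (c₂ : ZMod v))).val = (c₁ + (v - c₂)) % v := by
  rw [shift_sub i c₁ c₂ h₂, ZMod.val_natCast]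

lemma shift_ne (i : ZMod v) {c₁ c₂ : ℕ} (h₁ : c₁ < v) (h₂ : c₂ < v) (h : c₁ ≠ c₂) :
    i + (c₁ : ZMod v) ≠ i + (c₂ : ZMod v) := by
  intro H
  have h' : (c₁ : ZMod v) = c₂ := add_left_cancel H
  have hh := congrArg ZMod.val h'
  rw [ZMod.val_natCast, ZMod.val_natCast, Nat.mod_eq_of_lt h₁, Nat.mod_eq_of_lt h₂] at hh
  exact h hh

lemma shift_ne0 (i : ZMod v) {c : ℕ} (h1 : 0 < c) (h2 : c < v) :
    i + (c : ZMod v) ≠ i := by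
  intro H
  have h' : (c : ZMod v) = 0 := by rwa [add_eq_left] at H
  have hh := congrArg ZMod.val h'
  rw [ZMod.val_natCast, Nat.mod_eq_of_lt h2, ZMod.val_zero] at hh
  omega

end ZHelpers

lemma classify {v : ℕ} {T : Finset (ZMod v × ZMod v × ZMod v)} (hT : isMTS T)
    (hgood : isGood (Equiv.refl (ZMod v)) (v / 2) T)
    (hv2 : v / 2 + v / 2 = v) (h3 : 3 ≤ v / 2) (i : ZMod v) :
    cmem (i, i + 1, i + ((v / 2 : ℕ) : ZMod v)) T ∨
      cmem (i, i + 1, i + ((v / 2 + 1 : ℕ) : ZMod v)) T := by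
  haveI : NeZero v := ⟨by omega⟩
  haveI : Fact (1 < v) := ⟨by omega⟩
  have hne : i ≠ i + 1 := by
    intro H
    have h1 := congrArg ZMod.val (left_eq_add.mp H)
    rw [ZMod.val_one, ZMod.val_zero] at h1
    exact one_ne_zero h1
  obtain ⟨t, ⟨htT, hte⟩, -⟩ := hT.2 i (i + 1) hne
  obtain ⟨d1, d2, d3⟩ := hT.1 t htT
  obtain ⟨z, hz1, hz2, hcm⟩ : ∃ z, z ≠ i ∧ z ≠ i + 1 ∧ cmem (i, i + 1, z) T := by
    obtain ⟨x, y, w⟩ := t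
    rcases hte with h | h | h <;> simp only [Prod.mk.injEq] at h <;>
      obtain ⟨h1, h2⟩ := h <;> subst h1 <;> subst h2
    · exact ⟨w, d3, fun hh => d2 hh.symm, Or.inl htT⟩
    · exact ⟨x, d1, fun hh => d3 hh.symm, Or.inr (Or.inr htT)⟩
    · exact ⟨y, d2, fun hh => d1 hh.symm, Or.inr (Or.inl htT)⟩
  set d := (z - i).val with hd
  have hdv : d < v := ZMod.val_lt _
  have hzi : z = i + ((d : ℕ) : ZMod v) := by
    rw [show ((d : ℕ) : ZMod v) = z - i from by simp [hd, ZMod.natCast_val, ZMod.cast_id]]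
    ring
  have hd0 : d ≠ 0 := fun hh => hz1 (by rw [hzi, hh]; simp)
  have hd1 : d ≠ 1 := fun hh => hz2 (by rw [hzi, hh]; simp)
  have hcont : containedIn (Equiv.refl (ZMod v)) (i, i + 1, z) := by
    simp only [containedIn, Equiv.refl_apply]
    rw [add_sub_cancel_left, ZMod.val_one]
    omega
  have hlow : ¬ (d < v / 2) := by
    intro hlt
    apply hgood _ hcm
    refine ⟨hcont, i, ?_, ?_, ?_⟩ <;> simp only [Equiv.refl_apply]
    · rw [sub_self, ZMod.val_zero]; omega
    · rw [add_sub_cancel_left, ZMod.val_one]; omega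
    · exact hlt
  have hhigh : ¬ (v / 2 + 1 < d) := by
    intro hlt
    apply hgood _ hcm
    refine ⟨hcont, z, ?_, ?_, ?_⟩ <;> simp only [Equiv.refl_apply]
    · have e1 : (i - z).val = v - d := by
        nth_rewrite 1 [show (i : ZMod v) = i + ((0 : ℕ) : ZMod v) from by simp]
        rw [hzi, shift_sub_val i 0 d (le_of_lt hdv), Nat.mod_eq_of_lt (by omega)]
        omega
      rw [e1]; omega
    · have e2 : (i + 1 - z).val = 1 + (v - d) := by
        rw [show (i + 1 : ZMod v) = i + ((1 : ℕ) : ZMod v) from by norm_num]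
        rw [hzi, shift_sub_val i 1 d (le_of_lt hdv), Nat.mod_eq_of_lt (by omega)]
      rw [e2]; omega
    · rw [sub_self, ZMod.val_zero]; omega
  have : d = v / 2 ∨ d = v / 2 + 1 := by omega
  rcases this with hh | hh
  · exact Or.inl (by rw [← hh]; rw [← hzi]; exact hcm)
  · exact Or.inr (by rw [← hh]; rw [← hzi]; exact hcm)


/-- Suppose `v` is even, `X = ZMod v`, and the identity sequencing
`(0 1 ⋯ v-1)` is `(v/2)`-good for an MTS(`v`) on `X`.  Then for each `i`,
exactly one of `R i = (i, i+1, i+v/2)` and `S i = (i, i+1, i+1+v/2)` is a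
triple of the system; moreover either all the `R i` are triples or all the
`S i` are triples. -/
theorem even_identity_R_or_S {v : ℕ} (hv : Even v) (hv6 : 6 ≤ v)
    (T : Finset (ZMod v × ZMod v × ZMod v)) (hT : isMTS T)
    (hgood : isGood (Equiv.refl (ZMod v)) (v / 2) T) :
    (∀ i : ZMod v,
        Xor' (cmem (i, i + 1, i + (((v / 2 : ℕ)) : ZMod v)) T)
             (cmem (i, i + 1, i + (((v / 2 : ℕ)) : ZMod v) + 1) T)) ∧
    ((∀ i : ZMod v, cmem (i, i + 1, i + (((v / 2 : ℕ)) : ZMod v)) T) ∨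
     (∀ i : ZMod v, cmem (i, i + 1, i + (((v / 2 : ℕ)) : ZMod v) + 1) T)) := by
  haveI : NeZero v := ⟨by omega⟩
  obtain ⟨r, hr⟩ := hv
  have hv2 : v / 2 + v / 2 = v := by omega
  have h3 : 3 ≤ v / 2 := by omega
  have hHH : ((v / 2 : ℕ) : ZMod v) + ((v / 2 : ℕ) : ZMod v) = 0 := by
    rw [← Nat.cast_add, hv2, ZMod.natCast_self]
  have NEa : ∀ (j : ZMod v) (c₁ c₂ : ℕ), c₁ < v → c₂ < v → c₁ ≠ c₂ →
      j + (c₁ : ZMod v) ≠ j + (c₂ : ZMod v) := fun j _ _ a b c => shift_ne j a b c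
  have NE0 : ∀ (j : ZMod v) (c : ℕ), 0 < c → c < v → j + (c : ZMod v) ≠ j :=
    fun j _ a b => shift_ne0 j a b
  have notboth : ∀ i : ZMod v, ¬ (cmem (i, i + 1, i + ((v / 2 : ℕ) : ZMod v)) T ∧
      cmem (i, i + 1, i + ((v / 2 : ℕ) : ZMod v) + 1) T) := by
    rintro i ⟨h1, h2⟩
    rw [show (i + 1 : ZMod v) = i + ((1 : ℕ) : ZMod v) from by norm_num] at h1 h2
    rw [show (i + ((v / 2 : ℕ) : ZMod v) + 1 : ZMod v) =
        i + ((v / 2 + 1 : ℕ) : ZMod v) from by push_cast; ring] at h2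
    have := shared_edge hT
      ((NE0 i 1 (by omega) (by omega)).symm)
      (NE0 i (v / 2) (by omega) (by omega))
      (NEa i (v / 2) 1 (by omega) (by omega) (by omega))
      (NE0 i (v / 2 + 1) (by omega) (by omega))
      (NEa i (v / 2 + 1) 1 (by omega) (by omega) (by omega))
      h1 h2
    exact NEa i (v / 2) (v / 2 + 1) (by omega) (by omega) (by omega) this
  have SR : ∀ i j : ZMod v, j = i + ((v / 2 + 1 : ℕ) : ZMod v) →
      cmem (i, i + 1, i + ((v / 2 : ℕ) : ZMod v) + 1) T →
      cmem (j, j + 1, j + ((v / 2 : ℕ) : ZMod v)) T → False := by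
    intro i j hj hS hR
    subst hj
    rw [show (i + 1 : ZMod v) = i + ((1 : ℕ) : ZMod v) from by norm_num,
        show (i + ((v / 2 : ℕ) : ZMod v) + 1 : ZMod v) =
          i + ((v / 2 + 1 : ℕ) : ZMod v) from by push_cast; ring] at hS
    have hP : cmem (i + ((1 : ℕ) : ZMod v), i + ((v / 2 + 1 : ℕ) : ZMod v), i) T :=
      cmem_rot hS
    rw [show (i + ((v / 2 + 1 : ℕ) : ZMod v) + 1 : ZMod v) =
          i + ((v / 2 + 2 : ℕ) : ZMod v) from by push_cast; ring,
        show (i + ((v / 2 + 1 : ℕ) : ZMod v) + ((v / 2 : ℕ) : ZMod v) : ZMod v) =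
          i + ((1 : ℕ) : ZMod v) from by push_cast; linear_combination hHH] at hR
    have hQ : cmem (i + ((1 : ℕ) : ZMod v), i + ((v / 2 + 1 : ℕ) : ZMod v),
        i + ((v / 2 + 2 : ℕ) : ZMod v)) T := cmem_rot (cmem_rot hR)
    have := shared_edge hT
      (NEa i 1 (v / 2 + 1) (by omega) (by omega) (by omega))
      ((NE0 i 1 (by omega) (by omega)).symm)
      ((NE0 i (v / 2 + 1) (by omega) (by omega)).symm)
      (NEa i (v / 2 + 2) 1 (by omega) (by omega) (by omega))
      (NEa i (v / 2 + 2) (v / 2 + 1) (by omega) (by omega) (by omega))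
      hP hQ
    exact (NE0 i (v / 2 + 2) (by omega) (by omega)).symm this
  have RS : ∀ i j : ZMod v, j = i + ((v / 2 : ℕ) : ZMod v) →
      cmem (i, i + 1, i + ((v / 2 : ℕ) : ZMod v)) T →
      cmem (j, j + 1, j + ((v / 2 : ℕ) : ZMod v) + 1) T → False := by
    intro i j hj hR hS
    subst hj
    rw [show (i + 1 : ZMod v) = i + ((1 : ℕ) : ZMod v) from by norm_num] at hR
    have hP : cmem (i + ((1 : ℕ) : ZMod v), i + ((v / 2 : ℕ) : ZMod v), i) T :=
      cmem_rot hR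
    rw [show (i + ((v / 2 : ℕ) : ZMod v) + ((v / 2 : ℕ) : ZMod v) + 1 : ZMod v) =
          i + ((1 : ℕ) : ZMod v) from by push_cast; linear_combination hHH,
        show (i + ((v / 2 : ℕ) : ZMod v) + 1 : ZMod v) =
          i + ((v / 2 + 1 : ℕ) : ZMod v) from by push_cast; ring] at hS
    have hQ : cmem (i + ((1 : ℕ) : ZMod v), i + ((v / 2 : ℕ) : ZMod v),
        i + ((v / 2 + 1 : ℕ) : ZMod v)) T := cmem_rot (cmem_rot hS)
    have := shared_edge hT
      (NEa i 1 (v / 2) (by omega) (by omega) (by omega))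
      ((NE0 i 1 (by omega) (by omega)).symm)
      ((NE0 i (v / 2) (by omega) (by omega)).symm)
      (NEa i (v / 2 + 1) 1 (by omega) (by omega) (by omega))
      (NEa i (v / 2 + 1) (v / 2) (by omega) (by omega) (by omega))
      hP hQ
    exact (NE0 i (v / 2 + 1) (by omega) (by omega)).symm this
  have exh : ∀ i : ZMod v, cmem (i, i + 1, i + ((v / 2 : ℕ) : ZMod v)) T ∨
      cmem (i, i + 1, i + ((v / 2 : ℕ) : ZMod v) + 1) T := by
    intro i
    rcases classify hT hgood hv2 h3 i with h | h
    · exact Or.inl h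
    · right
      rwa [show (i + ((v / 2 + 1 : ℕ) : ZMod v) : ZMod v) =
        i + ((v / 2 : ℕ) : ZMod v) + 1 from by push_cast; ring] at h
  have stepR : ∀ i : ZMod v, cmem (i, i + 1, i + ((v / 2 : ℕ) : ZMod v)) T →
      cmem (i + ((v / 2 : ℕ) : ZMod v), i + ((v / 2 : ℕ) : ZMod v) + 1,
        i + ((v / 2 : ℕ) : ZMod v) + ((v / 2 : ℕ) : ZMod v)) T := by
    intro i h
    rcases exh (i + ((v / 2 : ℕ) : ZMod v)) with h' | h'
    · exact h'
    · exact (RS i _ rfl h h').elim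
  have stepS1 : ∀ i : ZMod v, cmem (i, i + 1, i + ((v / 2 : ℕ) : ZMod v) + 1) T →
      cmem (i + ((v / 2 + 1 : ℕ) : ZMod v), i + ((v / 2 + 1 : ℕ) : ZMod v) + 1,
        i + ((v / 2 + 1 : ℕ) : ZMod v) + ((v / 2 : ℕ) : ZMod v) + 1) T := by
    intro i h
    rcases exh (i + ((v / 2 + 1 : ℕ) : ZMod v)) with h' | h'
    · exact (SR i _ rfl h h').elim
    · exact h'
  have stepS2 : ∀ i : ZMod v, cmem (i, i + 1, i + ((v / 2 : ℕ) : ZMod v) + 1) T →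
      cmem (i + ((v / 2 : ℕ) : ZMod v), i + ((v / 2 : ℕ) : ZMod v) + 1,
        i + ((v / 2 : ℕ) : ZMod v) + ((v / 2 : ℕ) : ZMod v) + 1) T := by
    intro i h
    rcases exh (i + ((v / 2 : ℕ) : ZMod v)) with h' | h'
    · exfalso
      have h'' := stepR _ h'
      rw [show (i + ((v / 2 : ℕ) : ZMod v) + ((v / 2 : ℕ) : ZMod v) : ZMod v) = i from by
        linear_combination hHH] at h''
      exact notboth i ⟨h'', h⟩
    · exact h'
  have stepS : ∀ i : ZMod v, cmem (i, i + 1, i + ((v / 2 : ℕ) : ZMod v) + 1) T →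
      cmem (i + 1, i + 1 + 1, i + 1 + ((v / 2 : ℕ) : ZMod v) + 1) T := by
    intro i h
    have h1 := stepS2 _ (stepS1 _ h)
    rwa [show (i + ((v / 2 + 1 : ℕ) : ZMod v) + ((v / 2 : ℕ) : ZMod v) : ZMod v) = i + 1 from by
      push_cast; linear_combination hHH] at h1
  refine ⟨?_, ?_⟩
  · intro i
    rcases exh i with h | h
    · exact Or.inl ⟨h, fun hs => notboth i ⟨h, hs⟩⟩
    · exact Or.inr ⟨h, fun hr' => notboth i ⟨hr', h⟩⟩
  · by_cases hS : ∃ i : ZMod v, cmem (i, i + 1, i + ((v / 2 : ℕ) : ZMod v) + 1) T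
    · right
      obtain ⟨i0, hi0⟩ := hS
      have key : ∀ n : ℕ, cmem (i0 + ((n : ℕ) : ZMod v), i0 + ((n : ℕ) : ZMod v) + 1,
          i0 + ((n : ℕ) : ZMod v) + ((v / 2 : ℕ) : ZMod v) + 1) T := by
        intro n
        induction n with
        | zero => simpa using hi0
        | succ n ih =>
          have h1 := stepS _ ih
          rwa [show (i0 + ((n : ℕ) : ZMod v) + 1 : ZMod v) =
            i0 + (((n + 1 : ℕ)) : ZMod v) from by push_cast; ring] at h1
      intro j
      have e : j = i0 + (((j - i0).val : ℕ) : ZMod v) := by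
        simp [ZMod.natCast_val, ZMod.cast_id]
      rw [e]
      exact key _
    · left
      intro i
      rcases exh i with h | h
      · exact h
      · exact absurd ⟨i, h⟩ hS
end

section
/- No MTS(4) has a 3-good sequencing. -/
/-- No MTS(4) has a 3-good sequencing. -/
theorem no_three_good_mts4 {X : Type*} [Fintype X] [DecidableEq X]
    (hX : Fintype.card X = 4) (T : Finset (X × X × X)) (hT : isMTS T) :
    ¬ ∃ e : ZMod 4 ≃ X, ∀ i : ZMod 4, ¬ cmem (e i, e (i + 1), e (i + 2)) T := by
  rintro ⟨e, he⟩
  have h0 := he 0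
  have h3 := he 3
  have e01 : (0 + 1 : ZMod 4) = 1 := by decide
  have e02 : (0 + 2 : ZMod 4) = 2 := by decide
  have e31 : (3 + 1 : ZMod 4) = 0 := by decide
  have e32 : (3 + 2 : ZMod 4) = 1 := by decide
  rw [e01, e02] at h0
  rw [e31, e32] at h3
  have hab : e 0 ≠ e 1 := fun h => by
    have := e.injective h; exact absurd this (by decide)
  obtain ⟨t, ⟨htT, hte⟩, -⟩ := hT.2 (e 0) (e 1) hab
  obtain ⟨hd1, hd2, hd3⟩ := hT.1 t htT
  obtain ⟨p, q, r⟩ := t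
  have hall : ∀ j : ZMod 4, j = 0 ∨ j = 1 ∨ j = 2 ∨ j = 3 := by decide
  rcases hte with h | h | h <;> simp only [Prod.mk.injEq] at h <;>
      obtain ⟨h1, h2⟩ := h
  · -- t = (e 0, e 1, r)
    subst h1; subst h2
    rcases hall (e.symm r) with hj | hj | hj | hj <;>
        rw [← e.apply_symm_apply r, hj] at htT hd2 hd3
    · exact hd3 rfl
    · exact hd2 rfl
    · exact h0 (Or.inl htT)
    · exact h3 (Or.inr (Or.inl htT))
  · -- t = (p, e 0, e 1)
    subst h1; subst h2
    rcases hall (e.symm p) with hj | hj | hj | hj <;>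
        rw [← e.apply_symm_apply p, hj] at htT hd1 hd3
    · exact hd1 rfl
    · exact hd3 rfl
    · exact h0 (Or.inr (Or.inr htT))
    · exact h3 (Or.inl htT)
  · -- t = (e 1, q, e 0)
    subst h1; subst h2
    rcases hall (e.symm q) with hj | hj | hj | hj <;>
        rw [← e.apply_symm_apply q, hj] at htT hd1 hd2
    · exact hd2 rfl
    · exact hd1 rfl
    · exact h0 (Or.inr (Or.inl htT))
    · exact h3 (Or.inr (Or.inr htT))
end

section
/- No MTS(7) has a 4-good sequencing. -/
section Aux

lemma rotT3 {X : Type*} (t : X × X × X) : rotT (rotT (rotT t)) = t := rfl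

lemma cmem_rotT {X : Type*} [DecidableEq X] (t : X × X × X) (T : Finset (X × X × X)) :
    cmem (rotT t) T ↔ cmem t T := by
  unfold cmem
  rw [rotT3]
  tauto

lemma viol {X : Type*} (pos : X ≃ ZMod 7) (i d e : ZMod 7) (hd : d.val < e.val) (he : e.val < 4) :
    containedIn pos (pos.symm i, pos.symm (i+d), pos.symm (i+e)) ∧
    inWindow pos 4 (pos.symm i, pos.symm (i+d), pos.symm (i+e)) := by
  constructor
  · show (pos (pos.symm (i+d)) - pos (pos.symm i)).val < (pos (pos.symm (i+e)) - pos (pos.symm i)).val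
    simp only [Equiv.apply_symm_apply, add_sub_cancel_left]
    exact hd
  · refine ⟨i, ?_, ?_, ?_⟩ <;>
      simp only [Equiv.apply_symm_apply, add_sub_cancel_left, sub_self]
    · decide
    · omega
    · exact he

end Aux

lemma key {X : Type*} [DecidableEq X] (T : Finset (X × X × X)) (hT : isMTS T)
    (pos : X ≃ ZMod 7) (hg : isGood pos 4 T) (i : ZMod 7) :
    cmem (pos.symm i, pos.symm (i+1), pos.symm (i+4)) T := by
  have hne : pos.symm i ≠ pos.symm (i+1) := by
    intro h
    have h2 : i = i + 1 := pos.symm.injective h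
    simp at h2
    exact absurd h2 (by decide)
  obtain ⟨t, ⟨htT, hedge⟩, -⟩ := hT.2 _ _ hne
  obtain ⟨h1, h2, h3⟩ := hT.1 t htT
  have hw : ∃ w : X, cmem (pos.symm i, pos.symm (i+1), w) T ∧ w ≠ pos.symm i ∧ w ≠ pos.symm (i+1) := by
    rcases hedge with h | h | h <;> simp only [Prod.mk.injEq] at h
    · refine ⟨t.2.2, Or.inl ?_, ?_, ?_⟩
      · rw [h.1, h.2]; exact htT
      · rw [h.1]; exact h3
      · rw [h.2]; exact Ne.symm h2
    · refine ⟨t.1, Or.inr (Or.inr ?_), ?_, ?_⟩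
      · show (t.1, pos.symm i, pos.symm (i+1)) ∈ T
        rw [h.1, h.2]; exact htT
      · rw [h.1]; exact h1
      · rw [h.2]; exact Ne.symm h3
    · refine ⟨t.2.1, Or.inr (Or.inl ?_), ?_, ?_⟩
      · show (pos.symm (i+1), t.2.1, pos.symm i) ∈ T
        rw [h.1, h.2]; exact htT
      · rw [h.1]; exact h2
      · rw [h.2]; exact Ne.symm h1
  obtain ⟨w, hcm, hw1, hw2⟩ := hw
  have hwk : w = pos.symm (pos w) := (pos.symm_apply_apply w).symm
  have hki : pos w ≠ i := fun h => hw1 (by rw [hwk, h])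
  have hki1 : pos w ≠ i + 1 := fun h => hw2 (by rw [hwk, h])
  have hd : pos w = i + 2 ∨ pos w = i + 3 ∨ pos w = i + 4 ∨ pos w = i + 5 ∨ pos w = i + 6 := by
    have H : ∀ k j : ZMod 7, k ≠ j → k ≠ j + 1 →
        k = j+2 ∨ k = j+3 ∨ k = j+4 ∨ k = j+5 ∨ k = j+6 := by decide
    exact H _ _ hki hki1
  rw [hwk] at hcm
  rcases hd with h | h | h | h | h <;> rw [h] at hcm
  · exact absurd (viol pos i 1 2 (by decide) (by decide)) (hg _ hcm)
  · exact absurd (viol pos i 1 3 (by decide) (by decide)) (hg _ hcm)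
  · exact hcm
  · have hcm2 : cmem (pos.symm (i+5), pos.symm i, pos.symm (i+1)) T :=
      (cmem_rotT _ T).mpr ((cmem_rotT _ T).mpr hcm)
    have e1 : i + 5 + 2 = i := by
      rw [add_assoc, show (5:ZMod 7)+2 = 0 from by decide, add_zero]
    have e2 : i + 5 + 3 = i + 1 := by
      rw [add_assoc, show (5:ZMod 7)+3 = 1 from by decide]
    have hv := viol pos (i+5) 2 3 (by decide) (by decide)
    rw [e1, e2] at hv
    exact absurd hv (hg _ hcm2)
  · have hcm2 : cmem (pos.symm (i+6), pos.symm i, pos.symm (i+1)) T :=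
      (cmem_rotT _ T).mpr ((cmem_rotT _ T).mpr hcm)
    have e1 : i + 6 + 1 = i := by
      rw [add_assoc, show (6:ZMod 7)+1 = 0 from by decide, add_zero]
    have e2 : i + 6 + 2 = i + 1 := by
      rw [add_assoc, show (6:ZMod 7)+2 = 1 from by decide]
    have hv := viol pos (i+6) 1 2 (by decide) (by decide)
    rw [e1, e2] at hv
    exact absurd hv (hg _ hcm2)

lemma edgeIn_rotT {X : Type*} (a b : X) (t : X × X × X) :
    edgeIn a b (rotT t) ↔ edgeIn a b t := by
  simp only [edgeIn, rotT, Prod.mk.injEq]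
  tauto

/-- No MTS(7) has a 4-good sequencing. -/
theorem no_four_good_mts7 {X : Type*} [Fintype X] [DecidableEq X]
    (hX : Fintype.card X = 7) (T : Finset (X × X × X)) (hT : isMTS T)
    (pos : X ≃ ZMod 7) :
    ¬ isGood pos 4 T := by
  intro hg
  have hinj : ∀ a b : ZMod 7, pos.symm a = pos.symm b → a = b := fun a b h => pos.symm.injective h
  have h0 := key T hT pos hg 0
  have h4 := key T hT pos hg 4
  rw [show (0:ZMod 7)+1 = 1 from by decide, show (0:ZMod 7)+4 = 4 from by decide] at h0
  rw [show (4:ZMod 7)+1 = 5 from by decide, show (4:ZMod 7)+4 = 1 from by decide] at h4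
  have hne : pos.symm (1:ZMod 7) ≠ pos.symm 4 := fun h => absurd (hinj _ _ h) (by decide)
  obtain ⟨t, -, huniq⟩ := hT.2 (pos.symm (1:ZMod 7)) (pos.symm 4) hne
  -- triple from h0 contains the point pos.symm 0
  have c1 : ∃ u ∈ T, edgeIn (pos.symm (1:ZMod 7)) (pos.symm 4) u ∧
      (u.1 = pos.symm 0 ∨ u.2.1 = pos.symm 0 ∨ u.2.2 = pos.symm 0) := by
    have he : edgeIn (pos.symm (1:ZMod 7)) (pos.symm 4)
        ((pos.symm (0:ZMod 7), pos.symm 1, pos.symm 4)) := Or.inr (Or.inl rfl)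
    rcases h0 with h | h | h
    · exact ⟨_, h, he, Or.inl rfl⟩
    · exact ⟨_, h, (edgeIn_rotT _ _ _).mpr he, Or.inr (Or.inr rfl)⟩
    · exact ⟨_, h, (edgeIn_rotT _ _ (rotT (pos.symm (0:ZMod 7), pos.symm 1, pos.symm 4))).mpr
        ((edgeIn_rotT _ _ _).mpr he), Or.inr (Or.inl rfl)⟩
  -- triple from h4 has all points among pos.symm 4, pos.symm 5, pos.symm 1
  have c2 : ∃ u ∈ T, edgeIn (pos.symm (1:ZMod 7)) (pos.symm 4) u ∧
      (∀ c, (c = u.1 ∨ c = u.2.1 ∨ c = u.2.2) →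
        c = pos.symm 4 ∨ c = pos.symm 5 ∨ c = pos.symm 1) := by
    have he : edgeIn (pos.symm (1:ZMod 7)) (pos.symm 4)
        ((pos.symm (4:ZMod 7), pos.symm 5, pos.symm 1)) := Or.inr (Or.inr rfl)
    rcases h4 with h | h | h
    · exact ⟨_, h, he, fun c hc => hc⟩
    · exact ⟨_, h, (edgeIn_rotT _ _ _).mpr he, fun c hc => by
        simp only [rotT] at hc; tauto⟩
    · exact ⟨_, h, (edgeIn_rotT _ _ (rotT (pos.symm (4:ZMod 7), pos.symm 5, pos.symm 1))).mpr
        ((edgeIn_rotT _ _ _).mpr he), fun c hc => by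
        simp only [rotT] at hc; tauto⟩
  obtain ⟨u1, hu1T, hu1e, hu1p⟩ := c1
  obtain ⟨u2, hu2T, hu2e, hu2p⟩ := c2
  have h12 : u1 = u2 := (huniq u1 ⟨hu1T, hu1e⟩).trans (huniq u2 ⟨hu2T, hu2e⟩).symm
  subst h12
  have := hu2p (pos.symm 0) (by tauto)
  rcases this with h | h | h <;> exact absurd (hinj _ _ h) (by decide)
end
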